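/- arXiv:1708.00144 — 9 statements merged into one kernel-verified Lean document; each statement's English description precedes it below -/
import Mathlib

section
/- Let m and n be positive integers (not necessarily coprime). If there exists an AP-destroying permutation of ℤ/mℤ and an AP-destroying permutation of ℤ/nℤ, then there exists an AP-destroying permutation of ℤ/(mn)ℤ. -/
/-- A permutation `π` of a finite abelian group `G` is *AP-destroying* if it preserves no
3-term arithmetic progression `(a, a+r, a+2r)` with `r ≠ 0`, i.e. there are no `a, r` with
`r ≠ 0` and `π(a) - 2·π(a+r) + π(a+2r) = 0`. -/
def APDestroying {G : Type*} [AddCommGroup G] (π : Equiv.Perm G) : Prop :=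
  ∀ a r : G, r ≠ 0 → π a - 2 • π (a + r) + π (a + 2 • r) ≠ 0

theorem apDestroying_mul (m n : ℕ) (hm : 0 < m) (hn : 0 < n)
    (h1 : ∃ π : Equiv.Perm (ZMod m), APDestroying π)
    (h2 : ∃ π : Equiv.Perm (ZMod n), APDestroying π) :
    ∃ π : Equiv.Perm (ZMod (m * n)), APDestroying π := by
  obtain ⟨σ, hσ⟩ := h1
  obtain ⟨τ, hτ⟩ := h2
  haveI : NeZero m := ⟨hm.ne'⟩
  haveI : NeZero n := ⟨hn.ne'⟩
  haveI : NeZero (m * n) := ⟨(Nat.mul_pos hm hn).ne'⟩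
  set f : ZMod m × ZMod n → ZMod (m * n) :=
    fun p => (p.1.val : ZMod (m * n)) + (m : ZMod (m * n)) * (p.2.val : ZMod (m * n)) with hf
  have hdvd : m ∣ m * n := ⟨n, rfl⟩
  set φ : ZMod (m * n) →+* ZMod m := ZMod.castHom hdvd (ZMod m) with hφ
  have hv : ∀ {k : ℕ} [NeZero k] (z : ZMod k), ((z.val : ℕ) : ZMod k) = z := by
    intro k _ z
    simp [ZMod.natCast_val, ZMod.cast_id]
  have hφf : ∀ p, φ (f p) = p.1 := by
    intro p
    simp [hf, hφ, map_add, map_mul, map_natCast, ZMod.natCast_self, hv]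
  have hmn0 : (m : ZMod (m * n)) * (n : ZMod (m * n)) = 0 := by
    rw [← Nat.cast_mul, ZMod.natCast_self]
  have hmod : ∀ s : ℕ, (m : ZMod (m * n)) * ((s % n : ℕ) : ZMod (m * n))
      = (m : ZMod (m * n)) * (s : ZMod (m * n)) := by
    intro s
    conv_rhs => rw [← Nat.mod_add_div s n]
    push_cast
    rw [mul_add, ← mul_assoc, hmn0, zero_mul, add_zero]
  have hinj : Function.Injective f := by
    intro p q hpq
    have h1 : p.1 = q.1 := by
      have := congrArg φ hpq
      rwa [hφf, hφf] at this
    have h2 : p.2 = q.2 := by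
      have hmm : ((m * p.2.val : ℕ) : ZMod (m * n)) = ((m * q.2.val : ℕ) : ZMod (m * n)) := by
        have := hpq
        simp only [hf, h1] at this
        push_cast
        exact add_left_cancel this
      have hmeq := (ZMod.natCast_eq_natCast_iff _ _ _).mp hmm
      have h2v : p.2.val = q.2.val := by
        have l1 : m * p.2.val < m * n := (Nat.mul_lt_mul_left hm).mpr (ZMod.val_lt p.2)
        have l2 : m * q.2.val < m * n := (Nat.mul_lt_mul_left hm).mpr (ZMod.val_lt q.2)
        have := hmeq
        unfold Nat.ModEq at this
        rw [Nat.mod_eq_of_lt l1, Nat.mod_eq_of_lt l2] at this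
        exact Nat.eq_of_mul_eq_mul_left hm this
      exact ZMod.val_injective _ h2v
    exact Prod.ext h1 h2
  have hbij : Function.Bijective f := by
    rw [Fintype.bijective_iff_injective_and_card]
    exact ⟨hinj, by simp [ZMod.card]⟩
  set e : ZMod m × ZMod n ≃ ZMod (m * n) := Equiv.ofBijective f hbij with he
  have heapp : ∀ p, e p = f p := fun p => rfl
  refine ⟨(e.symm.trans (Equiv.prodCongr σ τ)).trans e, ?_⟩
  set π : Equiv.Perm (ZMod (m * n)) := (e.symm.trans (Equiv.prodCongr σ τ)).trans e with hπdef
  have hπf : ∀ p, π (f p) = f (σ p.1, τ p.2) := by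
    intro p
    simp only [hπdef, Equiv.trans_apply]
    rw [← heapp p, Equiv.symm_apply_apply, heapp]
    rfl
  intro a r hr
  set p := e.symm a with hp
  have ha : f p = a := by rw [← heapp]; exact e.apply_symm_apply a
  by_cases hrm : φ r = 0
  · -- r ≡ 0 mod m : use τ
    have hmdvd : m ∣ r.val := by
      have h0 : ((r.val : ℕ) : ZMod m) = 0 := by
        rw [ZMod.natCast_val]
        rw [hφ, ZMod.castHom_apply] at hrm
        exact hrm
      exact (ZMod.natCast_eq_zero_iff _ _).mp h0
    obtain ⟨k, hk⟩ := hmdvd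
    have hkn : k < n := by
      have := ZMod.val_lt r
      rw [hk] at this
      exact lt_of_mul_lt_mul_left this (Nat.zero_le m)
    set t : ZMod n := (k : ZMod n) with htdef
    have htval : t.val = k := ZMod.val_cast_of_lt hkn
    have htr : (m : ZMod (m * n)) * ((t.val : ℕ) : ZMod (m * n)) = r := by
      rw [htval, ← Nat.cast_mul, ← hk, hv r]
    have ht0 : t ≠ 0 := by
      intro h
      apply hr
      have : k = 0 := by rw [← htval, h, ZMod.val_zero]
      have : r.val = 0 := by rw [hk, this, mul_zero]
      rw [← hv r, this, Nat.cast_zero]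
    have hstep : ∀ (x : ZMod m) (y : ZMod n), f (x, y + t) = f (x, y) + r := by
      intro x y
      simp only [hf]
      rw [ZMod.val_add, hmod, ← htr]
      push_cast
      ring
    have ha' : f (p.1, p.2) = a := ha
    have hx1 : a + r = f (p.1, p.2 + t) := by rw [hstep, ha']
    have hx2 : a + 2 • r = f (p.1, p.2 + t + t) := by
      rw [two_nsmul, ← add_assoc, hstep p.1 (p.2 + t), hstep p.1 p.2, ha']
    intro hS
    rw [hx1, hx2] at hS
    rw [← ha'] at hS
    rw [hπf, hπf, hπf] at hS
    set u0 := (τ p.2).val with hu0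
    set u1 := (τ (p.2 + t)).val with hu1
    set u2 := (τ (p.2 + t + t)).val with hu2
    have hS' : ((m * u0 - 2 * (m * u1) + m * u2 : ℤ) : ZMod (m * n)) = 0 := by
      simp only [two_nsmul, hf] at hS
      push_cast
      linear_combination hS
    have hdvd2 : ((m * n : ℕ) : ℤ) ∣ (m * u0 - 2 * (m * u1) + m * u2 : ℤ) :=
      (ZMod.intCast_zmod_eq_zero_iff_dvd _ _).mp hS'
    have hndvd : (n : ℤ) ∣ ((u0 : ℤ) - 2 * u1 + u2) := by
      have hm' : (m : ℤ) ≠ 0 := Int.natCast_ne_zero.mpr hm.ne'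
      have : (m : ℤ) * n ∣ (m : ℤ) * ((u0 : ℤ) - 2 * u1 + u2) := by
        push_cast at hdvd2 ⊢
        convert hdvd2 using 1
        ring
      exact (mul_dvd_mul_iff_left hm').mp this
    have hn0 : (((u0 : ℤ) - 2 * u1 + u2 : ℤ) : ZMod n) = 0 :=
      (ZMod.intCast_zmod_eq_zero_iff_dvd _ _).mpr hndvd
    apply hτ p.2 t ht0
    simp only [two_nsmul, ← add_assoc]
    push_cast at hn0
    rw [hu0, hu1, hu2] at hn0
    rw [hv, hv, hv] at hn0
    linear_combination hn0
  · -- r ≢ 0 mod m : use σ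
    intro hS
    have key : ∀ x, φ (π x) = σ (φ x) := by
      intro x
      have hx : f (e.symm x) = x := by rw [← heapp]; exact e.apply_symm_apply x
      rw [← hx, hπf, hφf, hφf]
    have := congrArg φ hS
    simp only [map_add, map_sub, map_nsmul, map_zero, key] at this
    exact hσ (φ a) (φ r) hrm this
end

section
/- Suppose that (i) for every prime p ≥ 11 and every c ∈ {1, 2, 3, 5, 7} there exists an AP-destroying permutation of ℤ/(cp)ℤ, and (ii) for every integer m that is a product of two or three (not necessarily distinct) primes from {2, 3, 5, 7} there exists an AP-destroying permutation of ℤ/mℤ. Then for every positive integer n with n ∉ {2, 3, 5, 7} there exists an AP-destroying permutation of ℤ/nℤ. -/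
section Aux

variable (a b : ℕ) [NeZero a] [NeZero b]

private def eAB : ZMod a × ZMod b ≃ ZMod (a * b) where
  toFun p := ((p.1.val + a * p.2.val : ℕ) : ZMod (a * b))
  invFun x := (((x.val : ℕ) : ZMod a), ((x.val / a : ℕ) : ZMod b))
  left_inv := by
    rintro ⟨u, v⟩
    have ha : 0 < a := Nat.pos_of_ne_zero (NeZero.ne a)
    have hu : u.val < a := ZMod.val_lt u
    have hv : v.val < b := ZMod.val_lt v
    have h2 : a * (v.val + 1) ≤ a * b := Nat.mul_le_mul_left a hv
    have hlt : u.val + a * v.val < a * b := by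
      calc u.val + a * v.val < a + a * v.val := by omega
        _ = a * (v.val + 1) := by ring
        _ ≤ a * b := h2
    have hval : (((u.val + a * v.val : ℕ) : ZMod (a * b))).val = u.val + a * v.val :=
      ZMod.val_cast_of_lt hlt
    refine Prod.ext ?_ ?_
    · show ((((u.val + a * v.val : ℕ) : ZMod (a * b))).val : ZMod a) = u
      rw [hval]
      push_cast
      simp [ZMod.natCast_self, ZMod.natCast_zmod_val]
    · show ((((u.val + a * v.val : ℕ) : ZMod (a * b))).val / a : ZMod b) = v
      rw [hval]
      have hq : (u.val + a * v.val) / a = v.val := by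
        rw [Nat.add_mul_div_left _ _ ha, Nat.div_eq_of_lt hu]
        omega
      rw [hq, ZMod.natCast_zmod_val]
  right_inv := by
    intro x
    have ha : 0 < a := Nat.pos_of_ne_zero (NeZero.ne a)
    have hx : x.val < a * b := ZMod.val_lt x
    show ((((x.val : ℕ) : ZMod a)).val + a * (((x.val / a : ℕ) : ZMod b)).val : ℕ) = x
    rw [ZMod.val_natCast, ZMod.val_natCast]
    have hdb : x.val / a < b := Nat.div_lt_of_lt_mul hx
    rw [Nat.mod_eq_of_lt hdb]
    have hsum : x.val % a + a * (x.val / a) = x.val := Nat.mod_add_div _ _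
    rw [hsum, ZMod.natCast_zmod_val]

private lemma apd_mul (σ : Equiv.Perm (ZMod a)) (hσ : APDestroying σ)
    (τ : Equiv.Perm (ZMod b)) (hτ : APDestroying τ) :
    ∃ π : Equiv.Perm (ZMod (a * b)), APDestroying π := by
  classical
  have ha : 0 < a := Nat.pos_of_ne_zero (NeZero.ne a)
  have hb : 0 < b := Nat.pos_of_ne_zero (NeZero.ne b)
  set e := eAB a b with he
  refine ⟨e.symm.trans ((σ.prodCongr τ).trans e), ?_⟩
  -- the canonical ring hom down to `ZMod a`
  set φ : ZMod (a * b) →+* ZMod a := ZMod.castHom ⟨b, rfl⟩ (ZMod a) with hφ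
  have key1 : ∀ (u : ZMod a) (v : ZMod b), φ (e (u, v)) = u := by
    intro u v
    show φ ((u.val + a * v.val : ℕ) : ZMod (a * b)) = u
    rw [map_natCast]
    push_cast
    simp [ZMod.natCast_self, ZMod.natCast_zmod_val]
  have key2 : ∀ y : ZMod (a * b), (e.symm y).1 = φ y := by
    intro y
    show ((y.val : ℕ) : ZMod a) = φ y
    rw [hφ, ZMod.castHom_apply, ZMod.natCast_val]
  have keyπ : ∀ y : ZMod (a * b),
      (e.symm.trans ((σ.prodCongr τ).trans e)) y = e (σ (e.symm y).1, τ (e.symm y).2) := by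
    intro y; rfl
  have keyφπ : ∀ y : ZMod (a * b),
      φ ((e.symm.trans ((σ.prodCongr τ).trans e)) y) = σ (φ y) := by
    intro y
    rw [keyπ, key1, key2]
  -- the additive embedding of `ZMod b` into `ZMod (a*b)`
  have hz : ((a : ZMod (a * b)) * (b : ZMod (a * b))) = 0 := by
    rw [← Nat.cast_mul]; exact ZMod.natCast_self _
  have hmod : ∀ m : ℕ, ((a * (m % b) : ℕ) : ZMod (a * b)) = ((a * m : ℕ) : ZMod (a * b)) := by
    intro m
    conv_rhs => rw [← Nat.mod_add_div m b]
    push_cast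
    rw [mul_add, ← mul_assoc, hz, zero_mul, add_zero]
  set ψ' : ZMod b → ZMod (a * b) := fun t => ((a * t.val : ℕ) : ZMod (a * b)) with hψ'
  have hadd : ∀ t t' : ZMod b, ψ' (t + t') = ψ' t + ψ' t' := by
    intro t t'
    show ((a * (t + t').val : ℕ) : ZMod (a * b))
        = ((a * t.val : ℕ) : ZMod (a * b)) + ((a * t'.val : ℕ) : ZMod (a * b))
    rw [ZMod.val_add, hmod]
    push_cast
    ring
  set ψ : ZMod b →+ ZMod (a * b) := AddMonoidHom.mk' ψ' hadd with hψ
  have hψinj : ∀ w : ZMod b, w ≠ 0 → ψ w ≠ 0 := by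
    intro w hw h0
    have h0' : ((a * w.val : ℕ) : ZMod (a * b)) = 0 := h0
    rw [ZMod.natCast_eq_zero_iff] at h0'
    have hbw : b ∣ w.val := (mul_dvd_mul_iff_left (a := a) (by exact_mod_cast ha.ne')).mp h0'
    have hw0 : w.val = 0 := Nat.eq_zero_of_dvd_of_lt hbw (ZMod.val_lt w)
    exact hw ((ZMod.val_eq_zero w).mp hw0)
  have keyE : ∀ (u : ZMod a) (v : ZMod b), e (u, v) = ((u.val : ℕ) : ZMod (a * b)) + ψ v := by
    intro u v
    show ((u.val + a * v.val : ℕ) : ZMod (a * b))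
        = ((u.val : ℕ) : ZMod (a * b)) + ((a * v.val : ℕ) : ZMod (a * b))
    push_cast
    ring
  intro x r hr
  set π := e.symm.trans ((σ.prodCongr τ).trans e) with hπ
  by_cases hra : φ r ≠ 0
  · intro h0
    have hc := congrArg φ h0
    simp only [map_add, map_sub, map_nsmul, map_zero, keyφπ] at hc
    exact hσ (φ x) (φ r) hra hc
  · push_neg at hra
    -- r is a multiple of a
    have hadvd : a ∣ r.val := by
      have h' : ((r.val : ℕ) : ZMod a) = 0 := by
        rw [ZMod.natCast_val]
        rw [hφ, ZMod.castHom_apply] at hra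
        exact hra
      rwa [ZMod.natCast_eq_zero_iff] at h'
    set s : ZMod b := ((r.val / a : ℕ) : ZMod b) with hs
    have hrv : r.val ≠ 0 := fun h => hr ((ZMod.val_eq_zero r).mp h)
    have hdb : r.val / a < b := Nat.div_lt_of_lt_mul (ZMod.val_lt r)
    have hsne : s ≠ 0 := by
      intro h
      have hv0 : s.val = 0 := (ZMod.val_eq_zero s).mpr h
      rw [hs, ZMod.val_cast_of_lt hdb] at hv0
      have hm0 : r.val % a = 0 := Nat.mod_eq_zero_of_dvd hadvd
      have h3 : a * (r.val / a) + r.val % a = r.val := Nat.div_add_mod r.val a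
      rw [hv0, Nat.mul_zero, Nat.zero_add, hm0] at h3
      exact hrv h3.symm
    have hψs : ψ s = r := by
      show ((a * s.val : ℕ) : ZMod (a * b)) = r
      rw [hs, ZMod.val_cast_of_lt hdb, Nat.mul_div_cancel' hadvd, ZMod.natCast_zmod_val]
    have keyshift : ∀ y : ZMod (a * b), e.symm (y + r) = ((e.symm y).1, (e.symm y).2 + s) := by
      intro y
      apply e.injective
      rw [Equiv.apply_symm_apply]
      symm
      have hy : e (e.symm y) = y := e.apply_symm_apply y
      calc e ((e.symm y).1, (e.symm y).2 + s)
          = (((e.symm y).1.val : ℕ) : ZMod (a * b)) + ψ ((e.symm y).2 + s) := keyE _ _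
        _ = ((((e.symm y).1.val : ℕ) : ZMod (a * b)) + ψ (e.symm y).2) + ψ s := by
            rw [map_add]; ring
        _ = e ((e.symm y).1, (e.symm y).2) + r := by rw [← keyE, hψs]
        _ = y + r := by rw [Prod.mk.eta, hy]
    set u := (e.symm x).1 with hu
    set v := (e.symm x).2 with hv
    have e1 : e.symm (x + r) = (u, v + s) := keyshift x
    have e2 : e.symm (x + 2 • r) = (u, v + 2 • s) := by
      have hx2 : x + 2 • r = (x + r) + r := by rw [two_nsmul]; ring
      rw [hx2, keyshift, e1, two_nsmul, add_assoc]
    have pv : ∀ y : ZMod (a * b),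
        π y = (((σ (e.symm y).1).val : ℕ) : ZMod (a * b)) + ψ (τ (e.symm y).2) := by
      intro y
      rw [hπ, keyπ, keyE]
    intro h0
    have p1 : π x = (((σ u).val : ℕ) : ZMod (a * b)) + ψ (τ v) := pv x
    have p2 : π (x + r) = (((σ u).val : ℕ) : ZMod (a * b)) + ψ (τ (v + s)) := by
      rw [pv, e1]
    have p3 : π (x + 2 • r) = (((σ u).val : ℕ) : ZMod (a * b)) + ψ (τ (v + 2 • s)) := by
      rw [pv, e2]
    have hval : π x - 2 • π (x + r) + π (x + 2 • r)
        = ψ (τ v - 2 • τ (v + s) + τ (v + 2 • s)) := by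
      rw [p1, p2, p3, ψ.map_add, ψ.map_sub, ψ.map_nsmul, smul_add]
      abel
    rw [hval] at h0
    exact hψinj _ (hτ v s hsne) h0

end Aux

theorem reduction_to_special_cases
    (h1 : ∀ p : ℕ, p.Prime → 11 ≤ p → ∀ c ∈ ({1, 2, 3, 5, 7} : Set ℕ),
      ∃ π : Equiv.Perm (ZMod (c * p)), APDestroying π)
    (h2 : ∀ m : ℕ,
      ((∃ p ∈ ({2, 3, 5, 7} : Set ℕ), ∃ q ∈ ({2, 3, 5, 7} : Set ℕ), m = p * q) ∨
        (∃ p ∈ ({2, 3, 5, 7} : Set ℕ), ∃ q ∈ ({2, 3, 5, 7} : Set ℕ),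
          ∃ r ∈ ({2, 3, 5, 7} : Set ℕ), m = p * q * r)) →
      ∃ π : Equiv.Perm (ZMod m), APDestroying π) :
    ∀ n : ℕ, 0 < n → n ∉ ({2, 3, 5, 7} : Set ℕ) →
      ∃ π : Equiv.Perm (ZMod n), APDestroying π := by
  intro n
  induction n using Nat.strong_induction_on with
  | _ n IH =>
    intro hn hS
    -- trivial case n = 1
    rcases eq_or_ne n 1 with h1' | hne1
    · subst h1'
      exact ⟨Equiv.refl _, fun a r hr => absurd (Subsingleton.elim r 0) hr⟩
    have apmul : ∀ a b : ℕ, 0 < a → 0 < b →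
        (∃ σ : Equiv.Perm (ZMod a), APDestroying σ) →
        (∃ τ : Equiv.Perm (ZMod b), APDestroying τ) →
        ∃ π : Equiv.Perm (ZMod (a * b)), APDestroying π := by
      intro a b ha hb ⟨σ, hσ⟩ ⟨τ, hτ⟩
      haveI : NeZero a := ⟨ha.ne'⟩
      haveI : NeZero b := ⟨hb.ne'⟩
      exact apd_mul a b σ hσ τ hτ
    by_cases hA : ∃ p : ℕ, p.Prime ∧ p ∣ n ∧ 11 ≤ p
    · obtain ⟨p, hp, hpd, hp11⟩ := hA
      have hnm : n = p * (n / p) := (Nat.mul_div_cancel' hpd).symm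
      set m := n / p with hm
      have hmpos : 0 < m := Nat.div_pos (Nat.le_of_dvd hn hpd) hp.pos
      rcases eq_or_ne m 1 with hm1 | hmne1
      · have hn' : n = 1 * p := by rw [hnm, hm1]; ring
        rw [hn']
        exact h1 p hp hp11 1 (by simp)
      by_cases hmS : m ∈ ({2, 3, 5, 7} : Set ℕ)
      · have hn' : n = m * p := by rw [hnm]; ring
        rw [hn']
        refine h1 p hp hp11 m ?_
        simp only [Set.mem_insert_iff, Set.mem_singleton_iff] at hmS ⊢
        tauto
      · have hmlt : m < n := Nat.div_lt_self hn hp.one_lt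
        have hperm_m := IH m hmlt hmpos hmS
        have hperm_p : ∃ π : Equiv.Perm (ZMod p), APDestroying π := by
          have := h1 p hp hp11 1 (by simp)
          rwa [one_mul] at this
        rw [hnm]
        exact apmul p m hp.pos hmpos hperm_p hperm_m
    · push_neg at hA
      have hsmall : ∀ p : ℕ, p.Prime → p ∣ n → p ∈ ({2, 3, 5, 7} : Set ℕ) := by
        intro p hp hpd
        have hlt : p < 11 := hA p hp hpd
        have h2p := hp.two_le
        simp only [Set.mem_insert_iff, Set.mem_singleton_iff]
        interval_cases p
        · tauto
        · tauto
        · exact absurd hp (by norm_num)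
        · tauto
        · exact absurd hp (by norm_num)
        · tauto
        · exact absurd hp (by norm_num)
        · exact absurd hp (by norm_num)
        · exact absurd hp (by norm_num)
      obtain ⟨p, hp, hpd⟩ := Nat.exists_prime_and_dvd hne1
      have hpS := hsmall p hp hpd
      have hnm1 : n = p * (n / p) := (Nat.mul_div_cancel' hpd).symm
      set m1 := n / p with hm1'
      have hm1pos : 0 < m1 := Nat.div_pos (Nat.le_of_dvd hn hpd) hp.pos
      have hm1ne1 : m1 ≠ 1 := by
        intro h
        apply hS
        rw [hnm1, h, mul_one]
        exact hpS
      obtain ⟨q, hq, hqd⟩ := Nat.exists_prime_and_dvd hm1ne1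
      have hqdn : q ∣ n := hqd.trans ⟨p, by rw [hnm1]; ring⟩
      have hqS := hsmall q hq hqdn
      have hnm2 : m1 = q * (m1 / q) := (Nat.mul_div_cancel' hqd).symm
      set m2 := m1 / q with hm2'
      have hm2pos : 0 < m2 := Nat.div_pos (Nat.le_of_dvd hm1pos hqd) hq.pos
      have hn_eq : n = p * q * m2 := by rw [hnm1, hnm2]; ring
      rcases eq_or_ne m2 1 with hm21 | hm2ne1
      · refine h2 n (Or.inl ⟨p, hpS, q, hqS, ?_⟩)
        rw [hn_eq, hm21, mul_one]
      by_cases hm2S : m2 ∈ ({2, 3, 5, 7} : Set ℕ)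
      · exact h2 n (Or.inr ⟨p, hpS, q, hqS, m2, hm2S, hn_eq⟩)
      · have hm1lt : m1 < n := Nat.div_lt_self hn hp.one_lt
        have hm2lt : m2 < n := lt_of_le_of_lt (Nat.div_le_self _ _) hm1lt
        have hperm_m2 := IH m2 hm2lt hm2pos hm2S
        have hperm_pq : ∃ π : Equiv.Perm (ZMod (p * q)), APDestroying π :=
          h2 (p * q) (Or.inl ⟨p, hpS, q, hqS, rfl⟩)
        rw [hn_eq]
        exact apmul (p * q) m2 (Nat.mul_pos hp.pos hq.pos) hm2pos hperm_pq hperm_m2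
end

section
/- Let p ≥ 11 be prime and let t ∈ ℤ/pℤ with t ≠ 0. Define the permutation π of ℤ/pℤ by π(0) = t, π(1) = 0, and π(x) = t·x⁻¹ for x ∉ {0, 1}. Then for a, r ∈ ℤ/pℤ with r ≠ 0, π preserves the progression (a, a+r, a+2r) if and only if (a, r) ∈ {(0, 3·2⁻¹), (3, −3·2⁻¹), (3⁻¹, 3⁻¹), (1, −3⁻¹)} (i.e., the only preserved progressions are (0, 3/2, 3) and (1/3, 2/3, 1), together with their reverses). -/
/-!
Write `π = t • g`, where `g` is inversion with the values at `0` and `1` swapped; a progression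
`x, y, z` (so `x + z = 2y`, `x ≠ z`) is preserved iff `g x - 2 g y + g z = 0`. When no term is `0`
or `1` this never happens, since `x⁻¹ - 2y⁻¹ + z⁻¹ = (x - z)² / (2xyz)`; a middle term `0` or `1`
leaves `-2`, resp. `2 / (xz)`. An endpoint `0` forces `2y = 3` and an endpoint `1` forces `3y = 2`,
the remaining positions of `0` and `1` giving the nonzero values `±3` and `3/2`.
-/

variable {F : Type*} [Field F]

lemma inv_sub_two_mul_inv_add_inv (h2 : (2 : F) ≠ 0) {x y z : F} (hx : x ≠ 0) (hy : y ≠ 0)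
    (hz : z ≠ 0) (hxz : x + z = 2 * y) :
    x⁻¹ - 2 * y⁻¹ + z⁻¹ = (x - z) ^ 2 / (2 * x * y * z) := by
  field_simp
  linear_combination -(x + z) * hxz

lemma inv_sub_two_mul_inv_add_inv_ne_zero {x y z : F} (hx : x ≠ 0) (hy : y ≠ 0) (hz : z ≠ 0)
    (hxz : x + z = 2 * y) (hne : x ≠ z) : x⁻¹ - 2 * y⁻¹ + z⁻¹ ≠ 0 := by
  have h2 : (2 : F) ≠ 0 := fun h ↦ hne (by linear_combination hxz + (y - z) * h)
  rw [inv_sub_two_mul_inv_add_inv h2 hx hy hz hxz]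
  exact div_ne_zero (pow_ne_zero 2 (sub_ne_zero.2 hne)) (by simp [*])

section invSwapZeroOne

variable [DecidableEq F]

def invSwapZeroOne (x : F) : F := if x = 0 then 1 else if x = 1 then 0 else x⁻¹

@[simp] lemma invSwapZeroOne_zero : invSwapZeroOne (0 : F) = 1 := if_pos rfl

@[simp] lemma invSwapZeroOne_one : invSwapZeroOne (1 : F) = 0 := by simp [invSwapZeroOne]

lemma invSwapZeroOne_of_ne {x : F} (h0 : x ≠ 0) (h1 : x ≠ 1) : invSwapZeroOne x = x⁻¹ := by
  simp [invSwapZeroOne, h0, h1]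

lemma two_mul_eq_three_of_invSwapZeroOne_ap_zero (h2 : (2 : F) ≠ 0) (h3 : (3 : F) ≠ 0) {y : F}
    (hy : y ≠ 0)
    (h : invSwapZeroOne 0 - 2 * invSwapZeroOne y + invSwapZeroOne (2 * y) = 0) : 2 * y = 3 := by
  have h2y : 2 * y ≠ 0 := mul_ne_zero h2 hy
  by_cases hy1 : y = 1
  · subst hy1
    have h21 : (2 : F) * 1 ≠ 1 := fun h ↦ one_ne_zero (by linear_combination h)
    rw [invSwapZeroOne_zero, invSwapZeroOne_one, invSwapZeroOne_of_ne h2y h21] at h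
    field_simp at h
    exact absurd (by linear_combination h) h3
  by_cases h2y1 : 2 * y = 1
  · rw [invSwapZeroOne_zero, invSwapZeroOne_of_ne hy hy1, h2y1, invSwapZeroOne_one] at h
    field_simp at h
    exact absurd (by linear_combination -2 * h + h2y1) h3
  rw [invSwapZeroOne_zero, invSwapZeroOne_of_ne hy hy1, invSwapZeroOne_of_ne h2y h2y1] at h
  field_simp at h ⊢
  linear_combination h

lemma three_mul_eq_two_of_invSwapZeroOne_ap_one (h2 : (2 : F) ≠ 0) (h3 : (3 : F) ≠ 0) {y : F}
    (hy : y ≠ 1)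
    (h : invSwapZeroOne 1 - 2 * invSwapZeroOne y + invSwapZeroOne (2 * y - 1) = 0) :
    3 * y = 2 := by
  have h2y1 : 2 * y - 1 ≠ 1 := fun h ↦ hy (mul_left_cancel₀ h2 (by linear_combination h))
  by_cases hy0 : y = 0
  · subst hy0
    have hm1 : (2 : F) * 0 - 1 ≠ 0 := by simp
    rw [invSwapZeroOne_one, invSwapZeroOne_zero,
      invSwapZeroOne_of_ne hm1 (by simpa using h2y1)] at h
    field_simp at h
    exact absurd (by linear_combination h) h3
  by_cases h2y0 : 2 * y - 1 = 0
  · rw [invSwapZeroOne_one, invSwapZeroOne_of_ne hy0 hy, h2y0, invSwapZeroOne_zero] at h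
    field_simp at h
    exact absurd (by linear_combination -2 * h + h2y0) h3
  rw [invSwapZeroOne_one, invSwapZeroOne_of_ne hy0 hy, invSwapZeroOne_of_ne h2y0 h2y1] at h
  field_simp at h ⊢
  linear_combination -h

lemma invSwapZeroOne_ap_zero_of_two_mul_eq_three (h3 : (3 : F) ≠ 0) {y : F} (hy : 2 * y = 3) :
    invSwapZeroOne 0 - 2 * invSwapZeroOne y + invSwapZeroOne (2 * y) = 0 := by
  have hy0 : y ≠ 0 := by rintro rfl; exact h3 (by linear_combination -hy)
  have hy1 : y ≠ 1 := by rintro rfl; exact one_ne_zero (by linear_combination -hy)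
  have h31 : (3 : F) ≠ 1 := fun h ↦ h3 (by linear_combination y * h - hy)
  rw [invSwapZeroOne_zero, invSwapZeroOne_of_ne hy0 hy1, hy, invSwapZeroOne_of_ne h3 h31]
  field_simp
  linear_combination 2 * hy

lemma invSwapZeroOne_ap_one_of_three_mul_eq_two (h2 : (2 : F) ≠ 0) {y : F} (hy : 3 * y = 2) :
    invSwapZeroOne 1 - 2 * invSwapZeroOne y + invSwapZeroOne (2 * y - 1) = 0 := by
  have hy0 : y ≠ 0 := by rintro rfl; exact h2 (by linear_combination -hy)
  have hy1 : y ≠ 1 := by rintro rfl; exact one_ne_zero (by linear_combination hy)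
  have hz0 : 2 * y - 1 ≠ 0 := fun h ↦ one_ne_zero (α := F) (by linear_combination -2 * hy + 3 * h)
  have hz1 : 2 * y - 1 ≠ 1 := fun h ↦ hy1 (mul_left_cancel₀ h2 (by linear_combination h))
  rw [invSwapZeroOne_one, invSwapZeroOne_of_ne hy0 hy1, invSwapZeroOne_of_ne hz0 hz1]
  field_simp
  linear_combination -hy

lemma invSwapZeroOne_ap_ne_zero (h2 : (2 : F) ≠ 0) {x y z : F} (hx0 : x ≠ 0) (hx1 : x ≠ 1)
    (hz0 : z ≠ 0) (hz1 : z ≠ 1) (hxz : x + z = 2 * y) (hne : x ≠ z) :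
    invSwapZeroOne x - 2 * invSwapZeroOne y + invSwapZeroOne z ≠ 0 := by
  rw [invSwapZeroOne_of_ne hx0 hx1, invSwapZeroOne_of_ne hz0 hz1]
  by_cases hy0 : y = 0
  · obtain rfl : z = -x := by linear_combination hxz + 2 * hy0
    rw [hy0, invSwapZeroOne_zero, inv_neg]
    exact fun h ↦ h2 (by linear_combination -h)
  by_cases hy1 : y = 1
  · rw [hy1, invSwapZeroOne_one]
    intro h
    field_simp at h
    exact h2 (by linear_combination h - hxz - 2 * hy1)
  rw [invSwapZeroOne_of_ne hy0 hy1]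
  exact inv_sub_two_mul_inv_add_inv_ne_zero hx0 hy0 hz0 hxz hne

theorem invSwapZeroOne_ap_eq_zero_iff (h2 : (2 : F) ≠ 0) (h3 : (3 : F) ≠ 0) {x y z : F}
    (hxz : x + z = 2 * y) (hne : x ≠ z) :
    invSwapZeroOne x - 2 * invSwapZeroOne y + invSwapZeroOne z = 0 ↔
      (x = 0 ∨ z = 0) ∧ 2 * y = 3 ∨ (x = 1 ∨ z = 1) ∧ 3 * y = 2 := by
  constructor
  · intro h
    have h' : invSwapZeroOne z - 2 * invSwapZeroOne y + invSwapZeroOne x = 0 := by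
      linear_combination h
    by_cases hx0 : x = 0
    · subst hx0
      obtain rfl : z = 2 * y := by linear_combination hxz
      exact .inl ⟨.inl rfl, two_mul_eq_three_of_invSwapZeroOne_ap_zero h2 h3
        (by rintro rfl; simp at hne) h⟩
    by_cases hz0 : z = 0
    · subst hz0
      obtain rfl : x = 2 * y := by linear_combination hxz
      exact .inl ⟨.inr rfl, two_mul_eq_three_of_invSwapZeroOne_ap_zero h2 h3
        (by rintro rfl; simp at hne) h'⟩
    by_cases hx1 : x = 1
    · subst hx1
      obtain rfl : z = 2 * y - 1 := by linear_combination hxz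
      exact .inr ⟨.inl rfl, three_mul_eq_two_of_invSwapZeroOne_ap_one h2 h3
        (by rintro rfl; norm_num at hne) h⟩
    by_cases hz1 : z = 1
    · subst hz1
      obtain rfl : x = 2 * y - 1 := by linear_combination hxz
      exact .inr ⟨.inr rfl, three_mul_eq_two_of_invSwapZeroOne_ap_one h2 h3
        (by rintro rfl; norm_num at hne) h'⟩
    exact absurd h (invSwapZeroOne_ap_ne_zero h2 hx0 hx1 hz0 hz1 hxz hne)
  · rintro (⟨rfl | rfl, hy⟩ | ⟨rfl | rfl, hy⟩)
    · obtain rfl : z = 2 * y := by linear_combination hxz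
      exact invSwapZeroOne_ap_zero_of_two_mul_eq_three h3 hy
    · obtain rfl : x = 2 * y := by linear_combination hxz
      linear_combination invSwapZeroOne_ap_zero_of_two_mul_eq_three h3 hy
    · obtain rfl : z = 2 * y - 1 := by linear_combination hxz
      exact invSwapZeroOne_ap_one_of_three_mul_eq_two h2 hy
    · obtain rfl : x = 2 * y - 1 := by linear_combination hxz
      linear_combination invSwapZeroOne_ap_one_of_three_mul_eq_two h2 hy

end invSwapZeroOne

lemma ap_endpoint_conditions_iff_mem (h2 : (2 : F) ≠ 0) (h3 : (3 : F) ≠ 0) {a r : F} :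
    ((a = 0 ∨ a + 2 * r = 0) ∧ 2 * (a + r) = 3 ∨ (a = 1 ∨ a + 2 * r = 1) ∧ 3 * (a + r) = 2) ↔
      (a, r) ∈ ({(0, 3 * 2⁻¹), (3, -(3 * 2⁻¹)), (3⁻¹, 3⁻¹), (1, -3⁻¹)} : Set (F × F)) := by
  have h22 : (2 : F) * 2⁻¹ = 1 := mul_inv_cancel₀ h2
  have h33 : (3 : F) * 3⁻¹ = 1 := mul_inv_cancel₀ h3
  simp only [Set.mem_insert_iff, Set.mem_singleton_iff, Prod.mk.injEq]
  constructor
  · rintro (⟨rfl | ha, hr⟩ | ⟨rfl | ha, hr⟩)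
    · exact .inl ⟨rfl, by linear_combination 2⁻¹ * hr - r * h22⟩
    · exact .inr <| .inl ⟨by linear_combination hr - ha,
        by linear_combination 2⁻¹ * (2 * ha - hr) - r * h22⟩
    · exact .inr <| .inr <| .inr ⟨rfl, by linear_combination 3⁻¹ * hr - r * h33⟩
    · exact .inr <| .inr <| .inl ⟨by linear_combination 3⁻¹ * (2 * hr - 3 * ha) - a * h33,
        by linear_combination 3⁻¹ * (3 * ha - hr) - r * h33⟩
  · rintro (⟨rfl, rfl⟩ | ⟨rfl, rfl⟩ | ⟨rfl, rfl⟩ | ⟨rfl, rfl⟩)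
    · exact .inl ⟨.inl rfl, by linear_combination 3 * h22⟩
    · exact .inl ⟨.inr (by linear_combination -3 * h22), by linear_combination -3 * h22⟩
    · exact .inr ⟨.inr (by linear_combination h33), by linear_combination 2 * h33⟩
    · exact .inr ⟨.inl rfl, by linear_combination -h33⟩

theorem preserved_aps_of_inversion_perm (p : ℕ) [Fact p.Prime] (hp : 11 ≤ p)
    (t : ZMod p) (ht : t ≠ 0) (π : Equiv.Perm (ZMod p))
    (hπ : ∀ x : ZMod p, π x = if x = 0 then t else if x = 1 then 0 else t * x⁻¹) :
    ∀ a r : ZMod p, r ≠ 0 →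
      (π a - 2 • π (a + r) + π (a + 2 • r) = 0 ↔
        (a, r) ∈ ({(0, 3 * 2⁻¹), (3, -(3 * 2⁻¹)), (3⁻¹, 3⁻¹), (1, -3⁻¹)} :
          Set (ZMod p × ZMod p))) := by
  intro a r hr
  have natCast_ne_zero {n : ℕ} (hn : 0 < n) (hnp : n < p) : (n : ZMod p) ≠ 0 :=
    (ZMod.natCast_eq_zero_iff n p).not.2 (Nat.not_dvd_of_pos_of_lt hn hnp)
  have h2 : (2 : ZMod p) ≠ 0 := by exact_mod_cast natCast_ne_zero (n := 2) two_pos (by omega)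
  have h3 : (3 : ZMod p) ≠ 0 := by exact_mod_cast natCast_ne_zero (n := 3) three_pos (by omega)
  have hπt (x : ZMod p) : π x = t * invSwapZeroOne x := by
    rw [hπ, invSwapZeroOne]; split_ifs <;> simp
  have hne : a ≠ a + 2 * r := fun h ↦ mul_ne_zero h2 hr (by linear_combination -h)
  simp only [nsmul_eq_mul, Nat.cast_ofNat, hπt]
  rw [show ∀ u v w : ZMod p, t * u - 2 * (t * v) + t * w = t * (u - 2 * v + w) by intros; ring,
    mul_eq_zero, or_iff_right ht, invSwapZeroOne_ap_eq_zero_iff h2 h3 (by ring) hne,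
    ap_endpoint_conditions_iff_mem h2 h3]
end

section
/- For every prime p ≥ 31 there exists t ∈ ℤ/pℤ such that t ∉ {0, 1, 4, 9}, 4t ≠ 1, 9t ≠ 1, and (t(t−1)/p) = ((1−t)/p) = −1. -/
open Finset

/-- The Legendre symbol `(a / p)` of an element `a : ZMod p`. -/
def legSym (p : ℕ) [Fact p.Prime] (a : ZMod p) : ℤ := legendreSym p a.val

theorem exists_t_for_two_p (p : ℕ) [Fact p.Prime] (hp : 31 ≤ p) :
    ∃ t : ZMod p, t ∉ ({0, 1, 4, 9} : Set (ZMod p)) ∧ 4 * t ≠ 1 ∧ 9 * t ≠ 1 ∧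
      legSym p (t * (t - 1)) = -1 ∧ legSym p (1 - t) = -1 := by
  classical
  set χ := quadraticChar (ZMod p) with hχdef
  have hF : ringChar (ZMod p) ≠ 2 := by
    rw [ZMod.ringChar_zmod_n]; omega
  have hχne : χ ≠ 1 := quadraticChar_ne_one hF
  set ε : ℤ := χ (-1) with hεdef
  have hεpm : ε = 1 ∨ ε = -1 := quadraticChar_dichotomy (neg_ne_zero.mpr one_ne_zero)
  have hεsq : ε * ε = 1 := by rcases hεpm with h | h <;> rw [h] <;> ring
  -- key translation from legSym to χ
  have hleg : ∀ a : ZMod p, legSym p a = χ a := by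
    intro a
    have : ((a.val : ℤ) : ZMod p) = a := by
      simp [ZMod.natCast_val, ZMod.cast_id]
    rw [legSym, legendreSym, this]
  -- the three sums
  have hs1 : ∑ t ∈ univ \ {0, 1}, χ t = -1 := by
    have h0 : ∑ t : ZMod p, χ t = 0 := quadraticChar_sum_zero hF
    have : ∑ t ∈ univ \ ({0, 1} : Finset (ZMod p)), χ t
        = (∑ t : ZMod p, χ t) - ∑ t ∈ ({0, 1} : Finset (ZMod p)), χ t :=
      sum_sdiff_eq_sub (subset_univ _)
    rw [this, h0, Finset.sum_insert (by simp [(by intro h; exact one_ne_zero h.symm :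
      (0:ZMod p) ≠ 1)]), Finset.sum_singleton]
    simp [hχdef, quadraticChar_zero]
  have hs2 : ∑ t ∈ univ \ {0, 1}, χ (1 - t) = -1 := by
    rw [← hs1]
    apply Finset.sum_nbij' (fun t => 1 - t) (fun t => 1 - t)
    · intro a ha
      simp only [Finset.mem_sdiff, Finset.mem_univ, Finset.mem_insert,
        Finset.mem_singleton, not_or, true_and] at ha ⊢
      constructor
      · intro h; exact ha.2 (by linear_combination -h)
      · intro h; exact ha.1 (by linear_combination -h)
    · intro a ha
      simp only [Finset.mem_sdiff, Finset.mem_univ, Finset.mem_insert,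
        Finset.mem_singleton, not_or, true_and] at ha ⊢
      constructor
      · intro h; exact ha.2 (by linear_combination -h)
      · intro h; exact ha.1 (by linear_combination -h)
    · intro a _; ring
    · intro a _; ring
    · intro a _; rfl
  have hs3 : ∑ t ∈ univ \ {0, 1}, χ t * χ (1 - t) = -ε := by
    have h1 : jacobiSum χ χ = ∑ t ∈ univ \ {0, 1}, χ t * χ (1 - t) :=
      jacobiSum_eq_sum_sdiff χ χ
    have h2 : jacobiSum χ χ⁻¹ = -χ (-1) := jacobiSum_nontrivial_inv hχne
    rw [(quadraticChar_isQuadratic (ZMod p)).inv] at h2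
    rw [← h1, h2, hεdef]
  -- the counting set
  set S : Finset (ZMod p) :=
    (univ \ {0, 1}).filter (fun t => χ t = ε ∧ χ (1 - t) = -1) with hSdef
  have hA : ∑ t ∈ S, (1 + ε * χ t) * (1 - χ (1 - t)) = 4 * S.card := by
    rw [Finset.sum_congr rfl (fun t ht => ?_), Finset.sum_const, nsmul_eq_mul, mul_comm]
    obtain ⟨-, h1, h2⟩ := Finset.mem_filter.mp ht
    rw [h1, h2, hεsq]; ring
  have hB : ∑ t ∈ (univ \ {0,1}).filter (fun t => ¬(χ t = ε ∧ χ (1 - t) = -1)),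
      (1 + ε * χ t) * (1 - χ (1 - t)) = 0 := by
    apply Finset.sum_eq_zero
    intro t ht
    obtain ⟨hmem, hcond⟩ := Finset.mem_filter.mp ht
    obtain ⟨-, ht01⟩ := Finset.mem_sdiff.mp hmem
    simp only [Finset.mem_insert, Finset.mem_singleton, not_or] at ht01
    have ht0 : (t : ZMod p) ≠ 0 := ht01.1
    have ht1 : (1 : ZMod p) - t ≠ 0 := sub_ne_zero.mpr (Ne.symm ht01.2)
    rw [not_and_or] at hcond
    rcases hcond with hc | hc
    · have hct : χ t = -ε := by
        rcases quadraticChar_dichotomy (F := ZMod p) ht0 with h | h <;>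
          rw [← hχdef] at h <;> rcases hεpm with hε | hε <;> omega
      rw [hct]
      have h0 : (1 : ℤ) + ε * -ε = 0 := by linear_combination -hεsq
      rw [h0, zero_mul]
    · have hct : χ (1 - t) = 1 := by
        rcases quadraticChar_dichotomy (F := ZMod p) ht1 with h | h <;>
          rw [← hχdef] at h <;> omega
      rw [hct, sub_self, mul_zero]
  have hsum4 : ∑ t ∈ univ \ {0, 1}, (1 + ε * χ t) * (1 - χ (1 - t)) = 4 * S.card := by
    rw [← Finset.sum_filter_add_sum_filter_not (univ \ {0,1})
      (fun t => χ t = ε ∧ χ (1 - t) = -1), ← hSdef, hA, hB, add_zero]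
  -- expand the sum
  have hcardF : (Fintype.card (ZMod p) : ℤ) = p := by rw [ZMod.card]
  have hcard01 : (univ \ ({0,1} : Finset (ZMod p))).card = p - 2 := by
    rw [Finset.card_sdiff_of_subset (subset_univ _), Finset.card_univ, ZMod.card]
    congr 1
    rw [Finset.card_insert_of_notMem (by
      simp only [Finset.mem_singleton]
      intro h; exact one_ne_zero h.symm), Finset.card_singleton]
  have hexpand : ∑ t ∈ univ \ {0, 1}, (1 + ε * χ t) * (1 - χ (1 - t))
      = (p - 2 : ℤ) - ε + 1 + ε * ε := by
    have : ∀ t : ZMod p, (1 + ε * χ t) * (1 - χ (1 - t))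
        = 1 + ε * χ t - χ (1 - t) - ε * (χ t * χ (1 - t)) := by intro t; ring
    rw [Finset.sum_congr rfl (fun t _ => this t)]
    rw [Finset.sum_sub_distrib, Finset.sum_sub_distrib, Finset.sum_add_distrib,
      ← Finset.mul_sum, ← Finset.mul_sum, hs1, hs2, hs3, Finset.sum_const, hcard01]
    rw [nsmul_eq_mul, Nat.cast_sub (by omega : 2 ≤ p)]
    push_cast
    ring
  have hcardS : (30 : ℤ) ≤ 4 * S.card := by
    rw [← hsum4, hexpand, hεsq]
    rcases hεpm with h | h <;> rw [h] <;> omega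
  have hScard : 5 ≤ S.card := by
    have : (30 : ℤ) ≤ 4 * S.card := hcardS
    have := Int.toNat_le.mpr this
    omega
  -- remove the four extra bad values
  set bad : Finset (ZMod p) := {4, 9, (4 : ZMod p)⁻¹, (9 : ZMod p)⁻¹} with hbad
  have hbadcard : bad.card ≤ 4 := by
    apply le_trans (Finset.card_insert_le _ _)
    have := Finset.card_insert_le (9 : ZMod p) ({(4 : ZMod p)⁻¹, (9 : ZMod p)⁻¹} : Finset (ZMod p))
    have := Finset.card_insert_le ((4 : ZMod p)⁻¹) ({(9 : ZMod p)⁻¹} : Finset (ZMod p))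
    simp_all
    omega
  have hnonempty : (S \ bad).Nonempty := by
    rw [← Finset.card_pos]
    have := Finset.le_card_sdiff bad S
    omega
  obtain ⟨t, ht⟩ := hnonempty
  obtain ⟨htS, htbad⟩ := Finset.mem_sdiff.mp ht
  obtain ⟨hmem, hχt, hχ1t⟩ := Finset.mem_filter.mp htS
  obtain ⟨-, ht01⟩ := Finset.mem_sdiff.mp hmem
  simp only [Finset.mem_insert, Finset.mem_singleton, not_or] at ht01
  rw [hbad] at htbad
  simp only [Finset.mem_insert, Finset.mem_singleton, not_or] at htbad
  refine ⟨t, ?_, ?_, ?_, ?_, ?_⟩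
  · simp only [Set.mem_insert_iff, Set.mem_singleton_iff, not_or]
    exact ⟨ht01.1, ht01.2, htbad.1, htbad.2.1⟩
  · intro h
    exact htbad.2.2.1 (eq_inv_of_mul_eq_one_right h)
  · intro h
    exact htbad.2.2.2 (eq_inv_of_mul_eq_one_right h)
  · rw [hleg, map_mul]
    have h9 : t - 1 = -1 * (1 - t) := by ring
    rw [h9, map_mul, hχt, hχ1t, ← hεdef, ← mul_assoc, hεsq]
    ring
  · rw [hleg]; exact hχ1t
end

section
/- Let p be an odd prime with p ≠ 3, and let t ∈ ℤ/pℤ satisfy t ∉ {0, 1, 4, 9}, 4t ≠ 1, 9t ≠ 1, and (t(t−1)/p) = ((1−t)/p) = −1. Let y ∈ ℤ/pℤ satisfy y ∉ {0, 1, −1, 2, 4}, 2y ≠ 1, 3y ≠ 1, ty ≠ 4, (2t+1)y ≠ 1, ((1−ty)/p) = ((1−y)/p) = (((4t−1)²y² − 2(4t+1)y + 1)/p) = −1, and ((1−9y)/p) = 1. Define the permutation π₂ʸ of ℤ/2ℤ × ℤ/pℤ by: π₂ʸ(0,0) = (1,t), π₂ʸ(1,0) = (0,1), π₂ʸ(0,1)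 = (0, y⁻¹), π₂ʸ(1,1) = (0,0), π₂ʸ(0,y) = (1,0), π₂ʸ(1,x) = (1, t·x⁻¹) for x ∉ {0,1}, and π₂ʸ(0,x) = (0, x⁻¹) for x ∉ {0, 1, y}. Then π₂ʸ is AP-destroying. -/
section Legendre

variable {p : ℕ} [Fact p.Prime]

theorem legSym_eq_quadraticChar (a : ZMod p) : legSym p a = quadraticChar (ZMod p) a := by
  simp [legSym, legendreSym]

theorem not_isSquare_of_legSym_eq_neg_one {a : ZMod p} (h : legSym p a = -1) : ¬IsSquare a :=
  quadraticChar_neg_one_iff_not_isSquare.mp (by rwa [← legSym_eq_quadraticChar])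

theorem legSym_mul (a b : ZMod p) : legSym p (a * b) = legSym p a * legSym p b := by
  simp only [legSym_eq_quadraticChar, map_mul]

theorem ZMod.natCast_ne_zero_of_prime {q : ℕ} (hq : q.Prime) (hqp : q ≠ p) :
    (q : ZMod p) ≠ 0 := by
  rw [Ne, ZMod.natCast_eq_zero_iff]
  exact fun h => hqp ((Nat.prime_dvd_prime_iff_eq Fact.out hq).mp h).symm

end Legendre

section Reduction

theorem sub_two_nsmul_add_eq_zero_iff {R : Type*} [Ring R] (u v w : ZMod 2 × R) :
    u - 2 • v + w = 0 ↔ u.1 = w.1 ∧ u.2 + w.2 = 2 * v.2 := by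
  have hfst : ∀ a b c : ZMod 2, a + c = 2 • b ↔ a = c := by decide
  rw [sub_add_eq_add_sub, sub_eq_zero, Prod.ext_iff, Prod.fst_add, Prod.smul_fst, hfst,
    Prod.snd_add, Prod.smul_snd, nsmul_eq_mul, Nat.cast_ofNat]

theorem apDestroying_of_fibers {F : Type*} [Field F] (h2 : (2 : F) ≠ 0)
    (π : Equiv.Perm (ZMod 2 × F))
    (h : ∀ (e f : ZMod 2) (A M C : F), A + C = 2 * M → (e ≠ f ∨ A ≠ C) →
      π (e, A) - 2 • π (f, M) + π (e, C) ≠ 0) :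
    APDestroying π := by
  rintro ⟨e, x⟩ ⟨ε, s⟩ hr
  have hend : (e, x) + 2 • (ε, s) = (e, x + 2 * s) := by
    have h2ε : ∀ ε : ZMod 2, 2 • ε = 0 := by decide
    simp [h2ε, two_mul]
  rw [hend]
  refine h e (e + ε) x (x + s) (x + 2 * s) (by ring) ?_
  by_contra! hne
  apply hr
  ext
  · simpa using hne.1
  · simpa [h2] using hne.2

end Reduction

section FiberMaps

variable {F : Type*} [Field F] [DecidableEq F] {t y x A C : F}

def piZero (t y x : F) : ZMod 2 × F :=
  if x = 0 then (1, t) else if x = 1 then (0, y⁻¹) else if x = y then (1, 0) else (0, x⁻¹)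

def piOne (t x : F) : ZMod 2 × F :=
  if x = 0 then (0, 1) else if x = 1 then (0, 0) else (1, t * x⁻¹)

@[simp] theorem piZero_zero : piZero t y 0 = (1, t) := if_pos rfl

@[simp] theorem piZero_one : piZero t y 1 = (0, y⁻¹) := by simp [piZero]

theorem piZero_self (hy0 : y ≠ 0) (hy1 : y ≠ 1) : piZero t y y = (1, 0) := by
  simp [piZero, hy0, hy1]

theorem piZero_of_ne (h0 : x ≠ 0) (h1 : x ≠ 1) (hy : x ≠ y) : piZero t y x = (0, x⁻¹) := by
  simp [piZero, h0, h1, hy]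

theorem piZero_fst_eq_one_iff (hy1 : y ≠ 1) : (piZero t y x).1 = 1 ↔ x = 0 ∨ x = y := by
  unfold piZero
  split_ifs <;> simp_all [hy1.symm]

@[simp] theorem piOne_zero : piOne t 0 = (0, 1) := if_pos rfl

@[simp] theorem piOne_one : piOne t 1 = (0, 0) := by simp [piOne]

theorem piOne_of_ne (h0 : x ≠ 0) (h1 : x ≠ 1) : piOne t x = (1, t * x⁻¹) := by
  simp [piOne, h0, h1]

theorem piOne_fst_eq_zero_iff : (piOne t x).1 = 0 ↔ x = 0 ∨ x = 1 := by
  unfold piOne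
  split_ifs <;> simp_all

theorem piOne_fst_eq_iff :
    (piOne t A).1 = (piOne t C).1 ↔ ((A = 0 ∨ A = 1) ↔ (C = 0 ∨ C = 1)) := by
  have key : ∀ a c : ZMod 2, a = c ↔ (a = 0 ↔ c = 0) := by decide
  rw [key, piOne_fst_eq_zero_iff, piOne_fst_eq_zero_iff]

theorem piZero_fst_eq_iff (hy1 : y ≠ 1) :
    (piZero t y A).1 = (piZero t y C).1 ↔ ((A = 0 ∨ A = y) ↔ (C = 0 ∨ C = y)) := by
  have key : ∀ a c : ZMod 2, a = c ↔ (a = 1 ↔ c = 1) := by decide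
  rw [key, piZero_fst_eq_one_iff hy1, piZero_fst_eq_one_iff hy1]

theorem piZero_snd_ne_piOne_snd (ht0 : t ≠ 0) (ht1 : t ≠ 1) (hy0 : y ≠ 0) (hy1 : y ≠ 1)
    (x : F) : (piZero t y x).2 ≠ (piOne t x).2 := by
  rcases eq_or_ne x 0 with rfl | hx0
  · simpa using ht1
  rcases eq_or_ne x 1 with rfl | hx1
  · simpa using hy0
  rw [piOne_of_ne hx0 hx1]
  rcases eq_or_ne x y with hxy | hxy
  · simp [hxy, piZero_self hy0 hy1, ht0, hy0]
  · rw [piZero_of_ne hx0 hx1 hxy]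
    intro h
    exact ht1 (mul_right_cancel₀ (inv_ne_zero hx0) ((one_mul _).trans h).symm)

end FiberMaps

section Algebra

variable {F : Type*} [Field F] {y A M C a b : F}

theorem inv_add_inv_eq_zero_iff (hA : A ≠ 0) (hC : C ≠ 0) :
    A⁻¹ + C⁻¹ = 0 ↔ A + C = 0 := by
  rw [inv_add_inv hA hC, div_eq_zero_iff, or_iff_left (mul_ne_zero hA hC)]

theorem mul_sub_sq_eq_of_mul_inv_add_inv (hA : A ≠ 0) (hC : C ≠ 0) (hM0 : M ≠ 0)
    (hM : A + C = 2 * M) (h : a * (A⁻¹ + C⁻¹) = 2 * b * M⁻¹) :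
    (b * (A - C)) ^ 2 = b * (b - a) * (2 * M) ^ 2 := by
  rw [inv_add_inv hA hC, hM] at h
  field_simp at h
  linear_combination 2 * b * h + b ^ 2 * (A + C + 2 * M) * hM

theorem isSquare_mul_sub_of_mul_inv_add_inv (h2 : (2 : F) ≠ 0) (hA : A ≠ 0) (hC : C ≠ 0)
    (hM0 : M ≠ 0) (hM : A + C = 2 * M) (h : a * (A⁻¹ + C⁻¹) = 2 * b * M⁻¹) :
    IsSquare (b * (b - a)) :=
  ⟨b * (A - C) / (2 * M), by
    field_simp
    linear_combination -(mul_sub_sq_eq_of_mul_inv_add_inv hA hC hM0 hM h)⟩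

theorem eq_of_inv_add_inv_eq (hA : A ≠ 0) (hC : C ≠ 0) (hM0 : M ≠ 0) (hM : A + C = 2 * M)
    (h : A⁻¹ + C⁻¹ = 2 * M⁻¹) : A = C := by
  have := mul_sub_sq_eq_of_mul_inv_add_inv hA hC hM0 hM (a := 1) (b := 1) (by simpa using h)
  simpa [sub_eq_zero] using this

/-- `C` is a root of `C² + (1 + y - 4by) C + y`. -/
theorem isSquare_discr_of_inv_add_inv (hy0 : y ≠ 0) (hC : C ≠ 0) (hM0 : M ≠ 0)
    (hM : 1 + C = 2 * M) (h : y⁻¹ + C⁻¹ = 2 * b * M⁻¹) :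
    IsSquare ((1 + y - 4 * b * y) ^ 2 - 4 * y) :=
  ⟨2 * C + 1 + y - 4 * b * y, by
    field_simp at h
    linear_combination -8 * h - 4 * (C + y) * hM⟩

end Algebra

section Configurations

variable {F : Type*} [Field F] [DecidableEq F] {t y A M C : F}

theorem piOne_destroys_ap (h2 : (2 : F) ≠ 0) (ht0 : t ≠ 0) (ht4 : 4 * t ≠ 1)
    (hM : A + C = 2 * M) (hAC : A ≠ C) : piOne t A - 2 • piOne t M + piOne t C ≠ 0 := by
  rw [Ne, sub_two_nsmul_add_eq_zero_iff, piOne_fst_eq_iff]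
  rintro ⟨hfst, hsnd⟩
  by_cases hA : A = 0 ∨ A = 1
  · obtain ⟨hM2, hsum⟩ : 2 * M = 1 ∧ (piOne t A).2 + (piOne t C).2 = 1 := by
      obtain hC := hfst.mp hA
      rcases hA with rfl | rfl <;> rcases hC with rfl | rfl <;>
        first | exact absurd rfl hAC | exact ⟨by linear_combination -hM, by simp⟩
    have hM0 : M ≠ 0 := by rintro rfl; simp at hM2
    have hM1 : M ≠ 1 := by rintro rfl; exact one_ne_zero (by linear_combination hM2)
    rw [hsum, piOne_of_ne hM0 hM1] at hsnd
    field_simp at hsnd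
    exact ht4 (by linear_combination -2 * hsnd + hM2)
  · have hC : C ≠ 0 ∧ C ≠ 1 := by rwa [hfst, not_or] at hA
    rw [not_or] at hA
    rw [piOne_of_ne hA.1 hA.2, piOne_of_ne hC.1 hC.2, ← mul_add] at hsnd
    rcases eq_or_ne M 0 with rfl | hM0
    · rw [(inv_add_inv_eq_zero_iff hA.1 hC.1).mpr (by simpa using hM), mul_zero,
        piOne_zero] at hsnd
      exact h2 (by linear_combination -hsnd)
    rcases eq_or_ne M 1 with rfl | hM1
    · rw [piOne_one, mul_zero, mul_eq_zero, inv_add_inv_eq_zero_iff hA.1 hC.1, hM] at hsnd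
      rcases hsnd with h | h
      exacts [ht0 h, h2 (by linear_combination h)]
    rw [piOne_of_ne hM0 hM1] at hsnd
    exact hAC (eq_of_inv_add_inv_eq hA.1 hC.1 hM0 hM (by
      rw [mul_left_comm] at hsnd; exact mul_left_cancel₀ ht0 hsnd))

theorem piZero_destroys_ap_of_one (hy0 : y ≠ 0) (hy1 : y ≠ 1) (hy3 : 3 * y ≠ 1)
    (hy2t : (2 * t + 1) * y ≠ 1) (hyd : ¬IsSquare ((1 - y) * (1 - 9 * y)))
    (hC0 : C ≠ 0) (hC1 : C ≠ 1) (hM : 1 + C = 2 * M) :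
    y⁻¹ + C⁻¹ ≠ 2 * (piZero t y M).2 := by
  intro hsnd
  rcases eq_or_ne M 0 with rfl | hM0
  · obtain rfl : C = -1 := by linear_combination hM
    rw [piZero_zero] at hsnd
    field_simp at hsnd
    exact hy2t (by linear_combination -hsnd)
  rcases eq_or_ne M 1 with rfl | hM1
  · exact hC1 (by linear_combination hM)
  rcases eq_or_ne M y with hMy | hMy
  · rw [hMy, piZero_self hy0 hy1, mul_zero, inv_add_inv_eq_zero_iff hy0 hC0] at hsnd
    exact hy3 (by linear_combination -hM + hsnd - 2 * hMy)
  rw [piZero_of_ne hM0 hM1 hMy] at hsnd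
  have hdisc := isSquare_discr_of_inv_add_inv (b := 1) hy0 hC0 hM0 hM (by rw [hsnd, mul_one])
  exact hyd (by convert hdisc using 1; ring)

theorem piZero_destroys_ap (h2 : (2 : F) ≠ 0) (ht0 : t ≠ 0) (hy0 : y ≠ 0) (hy1 : y ≠ 1)
    (hy2 : y ≠ 2) (hy3 : 3 * y ≠ 1) (hty : t * y ≠ 4) (hy2t : (2 * t + 1) * y ≠ 1)
    (hy : ¬IsSquare (1 - y)) (hyd : ¬IsSquare ((1 - y) * (1 - 9 * y)))
    (hM : A + C = 2 * M) (hAC : A ≠ C) :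
    piZero t y A - 2 • piZero t y M + piZero t y C ≠ 0 := by
  rw [Ne, sub_two_nsmul_add_eq_zero_iff, piZero_fst_eq_iff hy1]
  rintro ⟨hfst, hsnd⟩
  by_cases hA : A = 0 ∨ A = y
  · obtain ⟨hM2, hsum⟩ : 2 * M = y ∧ (piZero t y A).2 + (piZero t y C).2 = t := by
      obtain hC := hfst.mp hA
      rcases hA with rfl | rfl <;> rcases hC with rfl | rfl <;>
        first
        | exact absurd rfl hAC
        | exact ⟨by linear_combination -hM, by simp [piZero_self hy0 hy1]⟩
    have hM0 : M ≠ 0 := by rintro rfl; exact hy0 (by linear_combination -hM2)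
    have hM1 : M ≠ 1 := by rintro rfl; exact hy2 (by linear_combination -hM2)
    have hMy : M ≠ y := by rintro rfl; exact hM0 (by linear_combination hM2)
    rw [hsum, piZero_of_ne hM0 hM1 hMy] at hsnd
    field_simp at hsnd
    exact hty (by linear_combination 2 * hsnd - t * hM2)
  · have hC : C ≠ 0 ∧ C ≠ y := by rwa [hfst, not_or] at hA
    rw [not_or] at hA
    wlog hC1 : C ≠ 1 generalizing A C
    · have hA1 : A ≠ 1 := fun h => hAC (h.trans (not_not.mp hC1).symm)
      exact this (by rwa [add_comm]) hAC.symm hfst.symm (by rwa [add_comm]) hC hA hA1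
    rw [piZero_of_ne hC.1 hC1 hC.2] at hsnd
    rcases eq_or_ne A 1 with rfl | hA1
    · rw [piZero_one] at hsnd
      exact piZero_destroys_ap_of_one hy0 hy1 hy3 hy2t hyd hC.1 hC1 hM hsnd
    rw [piZero_of_ne hA.1 hA1 hA.2] at hsnd
    rcases eq_or_ne M 0 with rfl | hM0
    · rw [(inv_add_inv_eq_zero_iff hA.1 hC.1).mpr (by simpa using hM), piZero_zero] at hsnd
      exact ht0 ((mul_eq_zero.mp hsnd.symm).resolve_left h2)
    rcases eq_or_ne M 1 with rfl | hM1
    · rw [piZero_one] at hsnd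
      have hsq := isSquare_mul_sub_of_mul_inv_add_inv (a := y) (b := 1) h2 hA.1 hC.1
        one_ne_zero hM (by rw [hsnd]; field_simp)
      exact hy (by simpa using hsq)
    rcases eq_or_ne M y with hMy | hMy
    · rw [hMy, piZero_self hy0 hy1, mul_zero, inv_add_inv_eq_zero_iff hA.1 hC.1, hM,
        hMy] at hsnd
      exact hy0 ((mul_eq_zero.mp hsnd).resolve_left h2)
    rw [piZero_of_ne hM0 hM1 hMy] at hsnd
    exact hAC (eq_of_inv_add_inv_eq hA.1 hC.1 hM0 hM hsnd)

theorem piZero_piOne_destroys_ap_of_one (hy0 : y ≠ 0) (hy3 : 3 * y ≠ 1)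
    (hyd : ¬IsSquare ((4 * t - 1) ^ 2 * y ^ 2 - 2 * (4 * t + 1) * y + 1))
    (hC0 : C ≠ 0) (hC1 : C ≠ 1) (hM : 1 + C = 2 * M) :
    y⁻¹ + C⁻¹ ≠ 2 * (piOne t M).2 := by
  intro hsnd
  rcases eq_or_ne M 0 with rfl | hM0
  · obtain rfl : C = -1 := by linear_combination hM
    rw [piOne_zero] at hsnd
    field_simp at hsnd
    exact hy3 (by linear_combination -hsnd)
  rcases eq_or_ne M 1 with rfl | hM1
  · exact hC1 (by linear_combination hM)
  rw [piOne_of_ne hM0 hM1] at hsnd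
  have hdisc := isSquare_discr_of_inv_add_inv (b := t) hy0 hC0 hM0 hM (by rw [hsnd, mul_assoc])
  exact hyd (by convert hdisc using 1; ring)

theorem piZero_piOne_destroys_ap (h2 : (2 : F) ≠ 0) (ht0 : t ≠ 0) (ht1 : t ≠ 1)
    (hy0 : y ≠ 0) (hy1 : y ≠ 1) (hy2 : y ≠ 2) (hy4 : y ≠ 4) (hy3 : 3 * y ≠ 1)
    (htt : ¬IsSquare (t * (t - 1)))
    (hyd : ¬IsSquare ((4 * t - 1) ^ 2 * y ^ 2 - 2 * (4 * t + 1) * y + 1))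
    (hM : A + C = 2 * M) :
    piZero t y A - 2 • piOne t M + piZero t y C ≠ 0 := by
  rw [Ne, sub_two_nsmul_add_eq_zero_iff, piZero_fst_eq_iff hy1]
  rintro ⟨hfst, hsnd⟩
  rcases eq_or_ne A C with rfl | hAC
  · obtain rfl : M = A := mul_left_cancel₀ h2 (by linear_combination -hM)
    exact piZero_snd_ne_piOne_snd ht0 ht1 hy0 hy1 M
      (mul_left_cancel₀ h2 (by linear_combination hsnd))
  by_cases hA : A = 0 ∨ A = y
  · obtain ⟨hM2, hsum⟩ : 2 * M = y ∧ (piZero t y A).2 + (piZero t y C).2 = t := by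
      obtain hC := hfst.mp hA
      rcases hA with rfl | rfl <;> rcases hC with rfl | rfl <;>
        first
        | exact absurd rfl hAC
        | exact ⟨by linear_combination -hM, by simp [piZero_self hy0 hy1]⟩
    have hM0 : M ≠ 0 := by rintro rfl; exact hy0 (by linear_combination -hM2)
    have hM1 : M ≠ 1 := by rintro rfl; exact hy2 (by linear_combination -hM2)
    rw [hsum, piOne_of_ne hM0 hM1] at hsnd
    field_simp at hsnd
    exact hy4 (by linear_combination 2 * hsnd - hM2)
  · have hC : C ≠ 0 ∧ C ≠ y := by rwa [hfst, not_or] at hA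
    rw [not_or] at hA
    wlog hC1 : C ≠ 1 generalizing A C
    · have hA1 : A ≠ 1 := fun h => hAC (h.trans (not_not.mp hC1).symm)
      exact this (by rwa [add_comm]) hfst.symm (by rwa [add_comm]) hAC.symm hC hA hA1
    rw [piZero_of_ne hC.1 hC1 hC.2] at hsnd
    rcases eq_or_ne A 1 with rfl | hA1
    · rw [piZero_one] at hsnd
      exact piZero_piOne_destroys_ap_of_one hy0 hy3 hyd hC.1 hC1 hM hsnd
    rw [piZero_of_ne hA.1 hA1 hA.2] at hsnd
    rcases eq_or_ne M 0 with rfl | hM0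
    · rw [(inv_add_inv_eq_zero_iff hA.1 hC.1).mpr (by simpa using hM), piOne_zero] at hsnd
      exact h2 (by linear_combination -hsnd)
    rcases eq_or_ne M 1 with rfl | hM1
    · rw [piOne_one, mul_zero, inv_add_inv_eq_zero_iff hA.1 hC.1, hM] at hsnd
      exact h2 (by linear_combination hsnd)
    rw [piOne_of_ne hM0 hM1] at hsnd
    exact htt (isSquare_mul_sub_of_mul_inv_add_inv (a := 1) h2 hA.1 hC.1 hM0 hM
      (by rw [one_mul, hsnd, mul_assoc]))

theorem piOne_piZero_destroys_ap (h2 : (2 : F) ≠ 0) (h3 : (3 : F) ≠ 0) (ht0 : t ≠ 0)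
    (ht1 : t ≠ 1) (hy0 : y ≠ 0) (hy1 : y ≠ 1) (hy2 : 2 * y ≠ 1) (ht : ¬IsSquare (1 - t))
    (hty : ¬IsSquare (1 - t * y)) (hM : A + C = 2 * M) :
    piOne t A - 2 • piZero t y M + piOne t C ≠ 0 := by
  rw [Ne, sub_two_nsmul_add_eq_zero_iff, piOne_fst_eq_iff]
  rintro ⟨hfst, hsnd⟩
  rcases eq_or_ne A C with rfl | hAC
  · obtain rfl : M = A := mul_left_cancel₀ h2 (by linear_combination -hM)
    exact piZero_snd_ne_piOne_snd ht0 ht1 hy0 hy1 M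
      (mul_left_cancel₀ h2 (by linear_combination -hsnd))
  by_cases hA : A = 0 ∨ A = 1
  · obtain ⟨hM2, hsum⟩ : 2 * M = 1 ∧ (piOne t A).2 + (piOne t C).2 = 1 := by
      obtain hC := hfst.mp hA
      rcases hA with rfl | rfl <;> rcases hC with rfl | rfl <;>
        first | exact absurd rfl hAC | exact ⟨by linear_combination -hM, by simp⟩
    have hM0 : M ≠ 0 := by rintro rfl; simp at hM2
    have hM1 : M ≠ 1 := by rintro rfl; exact one_ne_zero (by linear_combination hM2)
    have hMy : M ≠ y := by rintro rfl; exact hy2 hM2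
    rw [hsum, piZero_of_ne hM0 hM1 hMy] at hsnd
    field_simp at hsnd
    exact h3 (by linear_combination -2 * hsnd + hM2)
  · have hC : C ≠ 0 ∧ C ≠ 1 := by rwa [hfst, not_or] at hA
    rw [not_or] at hA
    rw [piOne_of_ne hA.1 hA.2, piOne_of_ne hC.1 hC.2, ← mul_add] at hsnd
    rcases eq_or_ne M 0 with rfl | hM0
    · rw [(inv_add_inv_eq_zero_iff hA.1 hC.1).mpr (by simpa using hM), mul_zero,
        piZero_zero] at hsnd
      exact ht0 ((mul_eq_zero.mp hsnd.symm).resolve_left h2)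
    rcases eq_or_ne M 1 with rfl | hM1
    · rw [piZero_one] at hsnd
      have hsq := isSquare_mul_sub_of_mul_inv_add_inv (a := t * y) (b := 1) h2 hA.1 hC.1
        one_ne_zero hM (by rw [mul_right_comm, hsnd]; field_simp)
      exact hty (by simpa using hsq)
    rcases eq_or_ne M y with hMy | hMy
    · rw [hMy, piZero_self hy0 hy1, mul_zero, mul_eq_zero, inv_add_inv_eq_zero_iff hA.1 hC.1,
        hM, hMy] at hsnd
      rcases hsnd with h | h
      exacts [ht0 h, hy0 ((mul_eq_zero.mp h).resolve_left h2)]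
    rw [piZero_of_ne hM0 hM1 hMy] at hsnd
    have hsq := isSquare_mul_sub_of_mul_inv_add_inv (b := 1) h2 hA.1 hC.1 hM0 hM
      (by rw [hsnd, mul_one])
    exact ht (by simpa using hsq)

end Configurations

theorem pi_two_y_apDestroying_general (p : ℕ) [Fact p.Prime] (hp2 : p ≠ 2) (hp3 : p ≠ 3)
    (t : ZMod p)
    (ht : t ∉ ({0, 1, 4, 9} : Set (ZMod p))) (ht4 : 4 * t ≠ 1)
    (htleg1 : legSym p (t * (t - 1)) = -1) (htleg2 : legSym p (1 - t) = -1)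
    (y : ZMod p)
    (hy : y ∉ ({0, 1, -1, 2, 4} : Set (ZMod p)))
    (hy2 : 2 * y ≠ 1) (hy3 : 3 * y ≠ 1) (hty : t * y ≠ 4) (hy2t : (2 * t + 1) * y ≠ 1)
    (hyleg1 : legSym p (1 - t * y) = -1) (hyleg2 : legSym p (1 - y) = -1)
    (hyleg3 : legSym p ((4 * t - 1) ^ 2 * y ^ 2 - 2 * (4 * t + 1) * y + 1) = -1)
    (hyleg4 : legSym p (1 - 9 * y) = 1)
    (π : Equiv.Perm (ZMod 2 × ZMod p))
    (hπ0 : ∀ x : ZMod p, π (0, x) =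
      if x = 0 then ((1 : ZMod 2), t)
      else if x = 1 then (0, y⁻¹)
      else if x = y then (1, 0)
      else (0, x⁻¹))
    (hπ1 : ∀ x : ZMod p, π (1, x) =
      if x = 0 then ((0 : ZMod 2), 1)
      else if x = 1 then (0, 0)
      else (1, t * x⁻¹)) :
    APDestroying π := by
  have h2 : (2 : ZMod p) ≠ 0 := by
    exact_mod_cast ZMod.natCast_ne_zero_of_prime Nat.prime_two (Ne.symm hp2)
  have h3 : (3 : ZMod p) ≠ 0 := by
    exact_mod_cast ZMod.natCast_ne_zero_of_prime Nat.prime_three (Ne.symm hp3)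
  simp only [Set.mem_insert_iff, Set.mem_singleton_iff, not_or] at ht hy
  obtain ⟨ht0, ht1, -, -⟩ := ht
  obtain ⟨hy0, hy1, -, hy2', hy4⟩ := hy
  have hyd : ¬IsSquare ((1 - y) * (1 - 9 * y)) :=
    not_isSquare_of_legSym_eq_neg_one (by rw [legSym_mul, hyleg2, hyleg4]; rfl)
  have hπ0' : ∀ x, π (0, x) = piZero t y x := hπ0
  have hπ1' : ∀ x, π (1, x) = piOne t x := hπ1
  refine apDestroying_of_fibers h2 π fun e f A M C hM hne => ?_
  have hZMod2 : ∀ u : ZMod 2, u = 0 ∨ u = 1 := by decide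
  rcases hZMod2 e with rfl | rfl <;> rcases hZMod2 f with rfl | rfl <;>
    simp only [hπ0', hπ1']
  · exact piZero_destroys_ap h2 ht0 hy0 hy1 hy2' hy3 hty hy2t
      (not_isSquare_of_legSym_eq_neg_one hyleg2) hyd hM (by simpa using hne)
  · exact piZero_piOne_destroys_ap h2 ht0 ht1 hy0 hy1 hy2' hy4 hy3
      (not_isSquare_of_legSym_eq_neg_one htleg1) (not_isSquare_of_legSym_eq_neg_one hyleg3) hM
  · exact piOne_piZero_destroys_ap h2 h3 ht0 ht1 hy0 hy1 hy2
      (not_isSquare_of_legSym_eq_neg_one htleg2) (not_isSquare_of_legSym_eq_neg_one hyleg1) hM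
  · exact piOne_destroys_ap h2 ht0 ht4 hM (by simpa using hne)

theorem pi_two_y_apDestroying (p : ℕ) [Fact p.Prime] (hp2 : p ≠ 2) (hp3 : p ≠ 3)
    (t : ZMod p)
    (ht : t ∉ ({0, 1, 4, 9} : Set (ZMod p))) (ht4 : 4 * t ≠ 1) (ht9 : 9 * t ≠ 1)
    (htleg1 : legSym p (t * (t - 1)) = -1) (htleg2 : legSym p (1 - t) = -1)
    (y : ZMod p)
    (hy : y ∉ ({0, 1, -1, 2, 4} : Set (ZMod p)))
    (hy2 : 2 * y ≠ 1) (hy3 : 3 * y ≠ 1) (hty : t * y ≠ 4) (hy2t : (2 * t + 1) * y ≠ 1)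
    (hyleg1 : legSym p (1 - t * y) = -1) (hyleg2 : legSym p (1 - y) = -1)
    (hyleg3 : legSym p ((4 * t - 1) ^ 2 * y ^ 2 - 2 * (4 * t + 1) * y + 1) = -1)
    (hyleg4 : legSym p (1 - 9 * y) = 1)
    (π : Equiv.Perm (ZMod 2 × ZMod p))
    (hπ0 : ∀ x : ZMod p, π (0, x) =
      if x = 0 then ((1 : ZMod 2), t)
      else if x = 1 then (0, y⁻¹)
      else if x = y then (1, 0)
      else (0, x⁻¹))
    (hπ1 : ∀ x : ZMod p, π (1, x) =
      if x = 0 then ((0 : ZMod 2), 1)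
      else if x = 1 then (0, 0)
      else (1, t * x⁻¹)) :
    APDestroying π :=
  pi_two_y_apDestroying_general p hp2 hp3 t ht ht4 htleg1 htleg2 y hy hy2 hy3 hty hy2t hyleg1 hyleg2
    hyleg3 hyleg4 π hπ0 hπ1
end

section
/- Let p be an odd prime and let t ∈ ℤ/pℤ satisfy t ∉ {−1, 0, 1, 2, 9}, 2t ≠ 1, and (t(t−1)/p) = ((t−1)(t−9)/p) = −1. Define the permutation π₃ of ℤ/3ℤ × ℤ/pℤ by: π₃(0,0) = (1,0), π₃(0,1) = (1,1), π₃(0,x) = (0, x⁻¹) for x ∉ {0,1}; π₃(1,0) = (2,t), π₃(1,1) = (2,0), π₃(1,x) = (1, x⁻¹) for x ∉ {0,1}; π₃(2,0) = (0,1), π₃(2,1) = (0,0), π₃(2,x) = (2, t·x⁻¹) for x ∉ {0,1}. Then π₃ is AP-destroying. -/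
set_option maxHeartbeats 1000000 in
private lemma quad_isSquare' {F : Type*} [Field F] (a b c s : F)
    (h : a*s^2 + b*s + c = 0) : IsSquare (b^2 - 4*(a*c)) :=
  ⟨2*a*s + b, by linear_combination (-4*a) * h⟩

private lemma isSquare_of_sq_mul' {F : Type*} [Field F] {k d : F} (hk : k ≠ 0)
    (h : IsSquare (k^2 * d)) : IsSquare d := by
  obtain ⟨r, hr⟩ := h
  exact ⟨r / k, by field_simp; linear_combination hr⟩

private lemma mulkey' {F : Type*} [Field F] (a b c u v w : F)
    (hu : u ≠ 0) (hv : v ≠ 0) (hw : w ≠ 0)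
    (h : a*u⁻¹ - (b*v⁻¹ + b*v⁻¹) + c*w⁻¹ = 0) :
    a*(v*w) - 2*b*(u*w) + c*(u*v) = 0 := by
  field_simp at h
  linear_combination h


theorem pi_three_apDestroying (p : ℕ) [Fact p.Prime] (hp : p ≠ 2) (t : ZMod p)
    (ht : t ∉ ({-1, 0, 1, 2, 9} : Set (ZMod p))) (ht2 : 2 * t ≠ 1)
    (hleg1 : legSym p (t * (t - 1)) = -1) (hleg2 : legSym p ((t - 1) * (t - 9)) = -1)
    (π : Equiv.Perm (ZMod 3 × ZMod p))
    (hπ0 : ∀ x : ZMod p, π (0, x) =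
      if x = 0 then ((1 : ZMod 3), 0) else if x = 1 then (1, 1) else (0, x⁻¹))
    (hπ1 : ∀ x : ZMod p, π (1, x) =
      if x = 0 then ((2 : ZMod 3), t) else if x = 1 then (2, 0) else (1, x⁻¹))
    (hπ2 : ∀ x : ZMod p, π (2, x) =
      if x = 0 then ((0 : ZMod 3), 1) else if x = 1 then (0, 0) else (2, t * x⁻¹)) :
    APDestroying π := by
  simp only [Set.mem_insert_iff, Set.mem_singleton_iff, not_or] at ht
  obtain ⟨htm1, ht0, ht1, htt2, ht9⟩ := ht
  have hp2 : (2:ZMod p) ≠ 0 := by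
    have h2 : ¬ (p ∣ 2) := fun hd => hp ((Nat.prime_dvd_prime_iff_eq Fact.out Nat.prime_two).mp hd)
    intro h
    exact h2 (by exact_mod_cast (ZMod.natCast_eq_zero_iff 2 p).mp (by exact_mod_cast h))
  have h10 : (1:ZMod p) ≠ 0 := one_ne_zero
  have h4p : (4:ZMod p) ≠ 0 := by
    rw [show (4:ZMod p) = 2*2 by norm_num]; exact mul_ne_zero hp2 hp2
  have hns1 : ¬ IsSquare (t*(t-1)) := by
    have := (legendreSym.eq_neg_one_iff p (a := (((t*(t-1)).val : ℤ)))).mp hleg1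
    simpa using this
  have hns2 : ¬ IsSquare ((t-1)*(t-9)) := by
    have := (legendreSym.eq_neg_one_iff p (a := ((((t-1)*(t-9)).val : ℤ)))).mp hleg2
    simpa using this
  have hz3 : ∀ w : ZMod 3, w = 0 ∨ w = 1 ∨ w = 2 := by decide
  have hfst : ∀ (i : ZMod 3) (z : ZMod p),
      (π (i, z)).1 = i + (if z = 0 ∨ z = 1 then 1 else 0) := by
    intro i z
    rcases hz3 i with hi|hi|hi <;> subst hi <;>
      [rw [hπ0]; rw [hπ1]; rw [hπ2]] <;>
      by_cases hz0 : z = 0 <;> by_cases hz1 : z = 1 <;>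
      simp [hz0, hz1] <;> decide
  rintro ⟨i, x⟩ ⟨j, y⟩ hr h
  simp only [two_nsmul, Prod.mk_add_mk] at h
  have h1 := congrArg Prod.fst h
  simp only [Prod.fst_add, Prod.fst_sub, Prod.fst_zero] at h1
  rw [hfst, hfst, hfst] at h1
  by_cases c0 : x = 0 ∨ x = 1 <;> by_cases c1 : x + y = 0 ∨ x + y = 1 <;>
      by_cases c2 : x + (y + y) = 0 ∨ x + (y + y) = 1
  -- TTT
  · have hy0 : y = 0 := by
      rcases c0 with hx|hx <;> rcases c1 with hv|hv
      · linear_combination hv - hx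
      · exfalso
        rcases c2 with c|c <;>
          first
            | exact hp2 (by linear_combination hx + c - 2*hv)
            | exact hp2 (by linear_combination 2*hv - hx - c)
            | exact h10 (by linear_combination hx + c - 2*hv)
            | exact h10 (by linear_combination 2*hv - hx - c)
      · exfalso
        rcases c2 with c|c <;>
          first
            | exact hp2 (by linear_combination hx + c - 2*hv)
            | exact hp2 (by linear_combination 2*hv - hx - c)
            | exact h10 (by linear_combination hx + c - 2*hv)
            | exact h10 (by linear_combination 2*hv - hx - c)
      · linear_combination hv - hx
    subst hy0
    simp only [add_zero] at h
    have e1 : ((0:ZMod 3)+1) = 1 := by decide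
    have e2 : ((0:ZMod 3)+(1+1)) = 2 := by decide
    have e3 : ((1:ZMod 3)+1) = 2 := by decide
    have e4 : ((1:ZMod 3)+(1+1)) = 0 := by decide
    have e5 : ((2:ZMod 3)+1) = 0 := by decide
    have e6 : ((2:ZMod 3)+(1+1)) = 1 := by decide
    have f1 : ((0:ZMod 3)+2) = 2 := by decide
    have f2 : ((0:ZMod 3)+(2+2)) = 1 := by decide
    have f3 : ((1:ZMod 3)+2) = 0 := by decide
    have f4 : ((1:ZMod 3)+(2+2)) = 2 := by decide
    have f5 : ((2:ZMod 3)+2) = 1 := by decide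
    have f6 : ((2:ZMod 3)+(2+2)) = 0 := by decide
    rcases hz3 j with hj|hj|hj <;> subst hj
    · exact hr rfl
    all_goals (
      rcases c0 with hx|hx <;> subst hx <;> rcases hz3 i with hi|hi|hi <;> subst hi <;>
        simp only [e1,e2,e3,e4,e5,e6,f1,f2,f3,f4,f5,f6, hπ0, hπ1, hπ2] at h <;>
        simp only [one_ne_zero, eq_self_iff_true, if_true, if_false, ite_true, ite_false,
          Prod.mk_add_mk, Prod.mk_sub_mk, Prod.mk_eq_zero] at h <;>
        first
          | exact ht2 (by linear_combination h.2)
          | exact ht2 (by linear_combination -h.2)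
          | exact htt2 (by linear_combination h.2)
          | exact htt2 (by linear_combination -h.2)
          | exact htm1 (by linear_combination h.2)
          | exact htm1 (by linear_combination -h.2)
          | exact hp2 (by linear_combination h.2)
          | exact hp2 (by linear_combination -h.2)
          | exact h10 (by linear_combination h.2)
          | exact h10 (by linear_combination -h.2)
          | exact ht1 (by linear_combination h.2)
          | exact ht1 (by linear_combination -h.2)
          | exact ht0 (by linear_combination h.2)
          | exact ht0 (by linear_combination -h.2))
  -- TTF
  · rw [if_pos c0, if_pos c1, if_neg c2] at h1
    first
      | exact (by decide : (1:ZMod 3) ≠ 0) (by linear_combination h1)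
      | exact (by decide : (1:ZMod 3) ≠ 0) (by linear_combination -h1)
      | exact (by decide : (2:ZMod 3) ≠ 0) (by linear_combination h1)
      | exact (by decide : (2:ZMod 3) ≠ 0) (by linear_combination -h1)
  -- TFT
  · rw [if_pos c0, if_neg c1, if_pos c2] at h1
    first
      | exact (by decide : (1:ZMod 3) ≠ 0) (by linear_combination h1)
      | exact (by decide : (1:ZMod 3) ≠ 0) (by linear_combination -h1)
      | exact (by decide : (2:ZMod 3) ≠ 0) (by linear_combination h1)
      | exact (by decide : (2:ZMod 3) ≠ 0) (by linear_combination -h1)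
  -- TFF
  · rw [if_pos c0, if_neg c1, if_neg c2] at h1
    first
      | exact (by decide : (1:ZMod 3) ≠ 0) (by linear_combination h1)
      | exact (by decide : (1:ZMod 3) ≠ 0) (by linear_combination -h1)
      | exact (by decide : (2:ZMod 3) ≠ 0) (by linear_combination h1)
      | exact (by decide : (2:ZMod 3) ≠ 0) (by linear_combination -h1)
  -- FTT
  · rw [if_neg c0, if_pos c1, if_pos c2] at h1
    first
      | exact (by decide : (1:ZMod 3) ≠ 0) (by linear_combination h1)
      | exact (by decide : (1:ZMod 3) ≠ 0) (by linear_combination -h1)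
      | exact (by decide : (2:ZMod 3) ≠ 0) (by linear_combination h1)
      | exact (by decide : (2:ZMod 3) ≠ 0) (by linear_combination -h1)
  -- FTF
  · rw [if_neg c0, if_pos c1, if_neg c2] at h1
    first
      | exact (by decide : (1:ZMod 3) ≠ 0) (by linear_combination h1)
      | exact (by decide : (1:ZMod 3) ≠ 0) (by linear_combination -h1)
      | exact (by decide : (2:ZMod 3) ≠ 0) (by linear_combination h1)
      | exact (by decide : (2:ZMod 3) ≠ 0) (by linear_combination -h1)
  -- FFT
  · rw [if_neg c0, if_neg c1, if_pos c2] at h1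
    first
      | exact (by decide : (1:ZMod 3) ≠ 0) (by linear_combination h1)
      | exact (by decide : (1:ZMod 3) ≠ 0) (by linear_combination -h1)
      | exact (by decide : (2:ZMod 3) ≠ 0) (by linear_combination h1)
      | exact (by decide : (2:ZMod 3) ≠ 0) (by linear_combination -h1)
  -- FFF : main "none in {0,1}" branch
  · clear h1
    rw [not_or] at c0 c1 c2
    obtain ⟨hu0, hu1⟩ := c0
    obtain ⟨hv0, hv1⟩ := c1
    obtain ⟨hw0, hw1⟩ := c2
    have e1 : ((0:ZMod 3)+1) = 1 := by decide
    have e2 : ((0:ZMod 3)+(1+1)) = 2 := by decide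
    have e3 : ((1:ZMod 3)+1) = 2 := by decide
    have e4 : ((1:ZMod 3)+(1+1)) = 0 := by decide
    have e5 : ((2:ZMod 3)+1) = 0 := by decide
    have e6 : ((2:ZMod 3)+(1+1)) = 1 := by decide
    have f1 : ((0:ZMod 3)+2) = 2 := by decide
    have f2 : ((0:ZMod 3)+(2+2)) = 1 := by decide
    have f3 : ((1:ZMod 3)+2) = 0 := by decide
    have f4 : ((1:ZMod 3)+(2+2)) = 2 := by decide
    have f5 : ((2:ZMod 3)+2) = 1 := by decide
    have f6 : ((2:ZMod 3)+(2+2)) = 0 := by decide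
    by_cases hy : y = 0
    · -- y = 0, so j ≠ 0
      subst hy
      simp only [add_zero] at h hv0 hv1 hw0 hw1
      rcases hz3 j with hj|hj|hj <;> subst hj
      · exact hr rfl
      all_goals (
        rcases hz3 i with hi|hi|hi <;> subst hi <;>
          simp only [e1,e2,e3,e4,e5,e6,f1,f2,f3,f4,f5,f6, hπ0, hπ1, hπ2,
            if_neg hu0, if_neg hu1,
            Prod.mk_add_mk, Prod.mk_sub_mk, Prod.mk_eq_zero] at h <;>
          ( have h3 : (2:ZMod p) * ((t - 1) * x⁻¹) = 0 := by
              first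
                | linear_combination 2*h.2
                | linear_combination -h.2
                | linear_combination -(2*h.2)
                | linear_combination h.2
            rcases mul_eq_zero.mp h3 with h4|h4
            · exact hp2 h4
            · rcases mul_eq_zero.mp h4 with h5|h5
              · exact ht1 (by linear_combination h5)
              · exact (inv_ne_zero hu0) h5 ))
    · -- y ≠ 0
      rcases hz3 j with hj|hj|hj <;> subst hj <;>
          rcases hz3 i with hi|hi|hi <;> subst hi <;>
          simp only [e1,e2,e3,e4,e5,e6,f1,f2,f3,f4,f5,f6, add_zero, hπ0, hπ1, hπ2,
            if_neg hu0, if_neg hu1, if_neg hv0, if_neg hv1, if_neg hw0, if_neg hw1,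
            Prod.mk_add_mk, Prod.mk_sub_mk, Prod.mk_eq_zero] at h
      -- (j,i) = (0,0)
      · have h3 := mulkey' 1 1 1 x (x+y) (x+(y+y)) hu0 hv0 hw0 (by linear_combination h.2)
        have h5 : (2:ZMod p)*(y*y) = 0 := by linear_combination h3
        rcases mul_eq_zero.mp h5 with h6|h6
        · exact hp2 h6
        · exact hy (mul_self_eq_zero.mp h6)
      -- (0,1)
      · have h3 := mulkey' 1 1 1 x (x+y) (x+(y+y)) hu0 hv0 hw0 (by linear_combination h.2)
        have h5 : (2:ZMod p)*(y*y) = 0 := by linear_combination h3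
        rcases mul_eq_zero.mp h5 with h6|h6
        · exact hp2 h6
        · exact hy (mul_self_eq_zero.mp h6)
      -- (0,2)
      · have h3 := mulkey' t t t x (x+y) (x+(y+y)) hu0 hv0 hw0 (by linear_combination h.2)
        have h5 : t*((2:ZMod p)*(y*y)) = 0 := by linear_combination h3
        rcases mul_eq_zero.mp h5 with h6|h6
        · exact ht0 h6
        · rcases mul_eq_zero.mp h6 with h7|h7
          · exact hp2 h7
          · exact hy (mul_self_eq_zero.mp h7)
      -- (1,0) : pattern (1,1,t)
      · have h3 := mulkey' 1 1 t x (x+y) (x+(y+y)) hu0 hv0 hw0 (by linear_combination h.2)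
        have hsq := quad_isSquare' (t-1) ((t-1)*y) (2*(y*y)) x (by linear_combination h3)
        rw [show ((t-1)*y)^2 - 4*((t-1)*(2*(y*y))) = y^2*((t-1)*(t-9)) by ring] at hsq
        exact hns2 (isSquare_of_sq_mul' hy hsq)
      -- (1,1) : pattern (1,t,1)
      · have h3 := mulkey' 1 t 1 x (x+y) (x+(y+y)) hu0 hv0 hw0 (by linear_combination h.2)
        have hsq := quad_isSquare' (2-2*t) ((4-4*t)*y) (2*(y*y)) x (by linear_combination h3)
        rw [show ((4-4*t)*y)^2 - 4*((2-2*t)*(2*(y*y))) = (4*y)^2*(t*(t-1)) by ring] at hsq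
        exact hns1 (isSquare_of_sq_mul' (mul_ne_zero h4p hy) hsq)
      -- (1,2) : pattern (t,1,1)
      · have h3 := mulkey' t 1 1 x (x+y) (x+(y+y)) hu0 hv0 hw0 (by linear_combination h.2)
        have hsq := quad_isSquare' (t-1) ((3*t-3)*y) (2*t*(y*y)) x (by linear_combination h3)
        rw [show ((3*t-3)*y)^2 - 4*((t-1)*(2*t*(y*y))) = y^2*((t-1)*(t-9)) by ring] at hsq
        exact hns2 (isSquare_of_sq_mul' hy hsq)
      -- (2,0) : pattern (1,t,1)
      · have h3 := mulkey' 1 t 1 x (x+y) (x+(y+y)) hu0 hv0 hw0 (by linear_combination h.2)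
        have hsq := quad_isSquare' (2-2*t) ((4-4*t)*y) (2*(y*y)) x (by linear_combination h3)
        rw [show ((4-4*t)*y)^2 - 4*((2-2*t)*(2*(y*y))) = (4*y)^2*(t*(t-1)) by ring] at hsq
        exact hns1 (isSquare_of_sq_mul' (mul_ne_zero h4p hy) hsq)
      -- (2,1) : pattern (1,1,t)
      · have h3 := mulkey' 1 1 t x (x+y) (x+(y+y)) hu0 hv0 hw0 (by linear_combination h.2)
        have hsq := quad_isSquare' (t-1) ((t-1)*y) (2*(y*y)) x (by linear_combination h3)
        rw [show ((t-1)*y)^2 - 4*((t-1)*(2*(y*y))) = y^2*((t-1)*(t-9)) by ring] at hsq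
        exact hns2 (isSquare_of_sq_mul' hy hsq)
      -- (2,2) : pattern (t,1,1)
      · have h3 := mulkey' t 1 1 x (x+y) (x+(y+y)) hu0 hv0 hw0 (by linear_combination h.2)
        have hsq := quad_isSquare' (t-1) ((3*t-3)*y) (2*t*(y*y)) x (by linear_combination h3)
        rw [show ((3*t-3)*y)^2 - 4*((t-1)*(2*t*(y*y))) = y^2*((t-1)*(t-9)) by ring] at hsq
        exact hns2 (isSquare_of_sq_mul' hy hsq)
end

section
/- Let G be a finite abelian group and H a subgroup of G. If there exists an AP-destroying permutation of H and an AP-destroying permutation of the quotient group G/H, then there exists an AP-destroying permutation of G. -/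
theorem apDestroying_of_subgroup_and_quotient (G : Type*) [AddCommGroup G] [Fintype G]
    (H : AddSubgroup G)
    (h1 : ∃ π : Equiv.Perm H, APDestroying π)
    (h2 : ∃ π : Equiv.Perm (G ⧸ H), APDestroying π) :
    ∃ π : Equiv.Perm G, APDestroying π := by
  classical
  obtain ⟨τ, hτ⟩ := h1
  obtain ⟨σ, hσ⟩ := h2
  have hmem : ∀ g : G, g - ((QuotientAddGroup.mk g : G ⧸ H)).out ∈ H := by
    intro g
    rw [← QuotientAddGroup.eq_iff_sub_mem]
    exact (QuotientAddGroup.out_eq' (QuotientAddGroup.mk g)).symm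
  let e : (G ⧸ H) × H ≃ G :=
  { toFun := fun p => p.1.out + (p.2 : G)
    invFun := fun g => (QuotientAddGroup.mk g,
      ⟨g - ((QuotientAddGroup.mk g : G ⧸ H)).out, hmem g⟩)
    left_inv := by
      rintro ⟨q, h⟩
      have hq : (QuotientAddGroup.mk (q.out + (h : G)) : G ⧸ H) = q := by
        rw [QuotientAddGroup.mk_add, QuotientAddGroup.out_eq',
          (QuotientAddGroup.eq_zero_iff _).2 h.2, add_zero]
      refine Prod.ext hq ?_
      ext
      simp [hq]
    right_inv := by
      intro g
      simp }
  refine ⟨e.symm.trans ((σ.prodCongr τ).trans e), ?_⟩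
  set π : Equiv.Perm G := e.symm.trans ((σ.prodCongr τ).trans e) with hπ
  have hπg : ∀ g : G, π g = (σ (QuotientAddGroup.mk g)).out +
      ((τ ⟨g - ((QuotientAddGroup.mk g : G ⧸ H)).out, hmem g⟩ : H) : G) := fun g => rfl
  have hmk : ∀ g : G, (QuotientAddGroup.mk (π g) : G ⧸ H) = σ (QuotientAddGroup.mk g) := by
    intro g
    rw [hπg g, QuotientAddGroup.mk_add, QuotientAddGroup.out_eq',
      (QuotientAddGroup.eq_zero_iff _).2 (τ _).2, add_zero]
  intro a r hr hcon
  by_cases hrH : r ∈ H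
  · -- the AP stays in a coset; use τ
    set q : G ⧸ H := QuotientAddGroup.mk a with hq
    have hq1 : (QuotientAddGroup.mk (a + r) : G ⧸ H) = q := by
      rw [QuotientAddGroup.mk_add, (QuotientAddGroup.eq_zero_iff _).2 hrH, add_zero]
    have hq2 : (QuotientAddGroup.mk (a + 2 • r) : G ⧸ H) = q := by
      have : (2 : ℕ) • r ∈ H := H.nsmul_mem hrH 2
      rw [QuotientAddGroup.mk_add, (QuotientAddGroup.eq_zero_iff _).2 this, add_zero]
    set r' : H := ⟨r, hrH⟩ with hr'
    set h : H := ⟨a - q.out, hmem a⟩ with hh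
    have e1 : π a = (σ q).out + ((τ h : H) : G) := hπg a
    have e2 : π (a + r) = (σ q).out + ((τ (h + r') : H) : G) := by
      rw [hπg (a + r)]
      congr 1
      · rw [hq1]
      · congr 1
        ext
        simp [hq1, hh, hr']
        abel
    have e3 : π (a + 2 • r) = (σ q).out + ((τ (h + 2 • r') : H) : G) := by
      rw [hπg (a + 2 • r)]
      congr 1
      · rw [hq2]
      · congr 1
        ext
        simp [hq2, hh, hr']
        abel
    have key : π a - 2 • π (a + r) + π (a + 2 • r) =
        ((τ h - 2 • τ (h + r') + τ (h + 2 • r') : H) : G) := by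
      rw [e1, e2, e3]
      push_cast
      abel
    have hr'0 : r' ≠ 0 := by
      intro h0
      apply hr
      simpa [hr'] using congrArg (fun x : H => (x : G)) h0
    have := hτ h r' hr'0
    rw [key] at hcon
    exact this (by exact_mod_cast hcon)
  · -- the AP moves between cosets; use σ
    have hr0 : (QuotientAddGroup.mk r : G ⧸ H) ≠ 0 := by
      rwa [Ne, QuotientAddGroup.eq_zero_iff]
    have := hσ (QuotientAddGroup.mk a) (QuotientAddGroup.mk r) hr0
    apply this
    have := congrArg (QuotientAddGroup.mk (s := H)) hcon
    simpa [QuotientAddGroup.mk_add, QuotientAddGroup.mk_sub, hmk] using this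
end

section
/- Let k be a positive integer and H a finite abelian group with |H| < 2^k. Then the group G = (ℤ/2ℤ)^k × H admits no AP-destroying permutation. -/
/-!
Let `T` be the 2-torsion of `G`. If `s₁ ≠ s₂` lie in `T`, then `(s₁, s₂, s₁)` is a 3-term
progression with common difference `s₂ - s₁`, so an AP-destroying `π` must have
`2 • (π s₁ - π s₂) ≠ 0`. Hence the translates `π s + T`, `s ∈ T`, are pairwise disjoint and
`|T|² ≤ |G|`. For `G = (ℤ/2ℤ)ᵏ × H` we have `|T| ≥ 2ᵏ` and `|G| = 2ᵏ|H|`, forcing `2ᵏ ≤ |H|`.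
-/

open Finset

namespace APDestroying

variable {G : Type*} [AddCommGroup G] {π : Equiv.Perm G}

theorem two_nsmul_sub_ne_zero (hπ : APDestroying π) {s₁ s₂ : G} (hne : s₁ ≠ s₂)
    (h₂ : 2 • (s₂ - s₁) = 0) : 2 • (π s₁ - π s₂) ≠ 0 := by
  have key := hπ s₁ (s₂ - s₁) (sub_ne_zero.mpr hne.symm)
  rwa [h₂, add_zero, add_sub_cancel, show π s₁ - 2 • π s₂ + π s₁ = 2 • (π s₁ - π s₂) by
    rw [smul_sub, two_nsmul]; abel] at key

theorem injOn_add_two_torsion (hπ : APDestroying π) :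
    Set.InjOn (fun p : G × G => π p.1 + p.2) ({s | 2 • s = 0} ×ˢ {t | 2 • t = 0}) := by
  rintro ⟨s₁, t₁⟩ ⟨hs₁, ht₁⟩ ⟨s₂, t₂⟩ ⟨hs₂, ht₂⟩ (heq : π s₁ + t₁ = π s₂ + t₂)
  obtain rfl : s₁ = s₂ := by
    by_contra hne
    refine hπ.two_nsmul_sub_ne_zero hne (by rw [smul_sub, hs₁, hs₂, sub_zero]) ?_
    rw [show π s₁ - π s₂ = t₂ - t₁ by rw [sub_eq_sub_iff_add_eq_add, heq, add_comm],
      smul_sub, ht₁, ht₂, sub_zero]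
  rw [add_left_cancel heq]

theorem card_two_torsion_sq_le [Fintype G] [DecidableEq G] (hπ : APDestroying π) :
    #{x : G | 2 • x = 0} ^ 2 ≤ Fintype.card G := by
  rw [sq, ← card_product, ← card_univ]
  refine card_le_card_of_injOn (fun p : G × G => π p.1 + p.2) (fun _ _ => mem_univ _) ?_
  simpa [Set.InjOn] using hπ.injOn_add_two_torsion

end APDestroying

theorem card_le_card_two_torsion_prod {V H : Type*} [AddCommGroup V] [AddCommGroup H]
    [Fintype V] [Fintype H] [DecidableEq V] [DecidableEq H] (hV : ∀ v : V, 2 • v = 0) :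
    Fintype.card V ≤ #{x : V × H | 2 • x = 0} := by
  rw [← card_univ]
  refine card_le_card_of_injOn (fun v => (v, 0)) (fun v _ => ?_)
    fun _ _ _ _ h => congrArg Prod.fst h
  simp [Prod.ext_iff, hV v]

theorem no_apDestroying_of_large_two_torsion_general (k : ℕ)
    (H : Type*) [AddCommGroup H] [Fintype H] (hH : Fintype.card H < 2 ^ k) :
    ¬ ∃ π : Equiv.Perm ((Fin k → ZMod 2) × H), APDestroying π := by
  classical
  rintro ⟨π, hπ⟩
  have hV : ∀ v : Fin k → ZMod 2, 2 • v = 0 := fun v => by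
    ext i; rw [Pi.smul_apply, two_nsmul, CharTwo.add_self_eq_zero, Pi.zero_apply]
  have hlow := card_le_card_two_torsion_prod (H := H) hV
  have hupp := hπ.card_two_torsion_sq_le
  simp only [Fintype.card_prod, Fintype.card_fun, ZMod.card, Fintype.card_fin] at hlow hupp
  have : 2 ^ k * 2 ^ k ≤ 2 ^ k * Fintype.card H :=
    sq (2 ^ k) ▸ (Nat.pow_le_pow_left hlow 2).trans hupp
  exact hH.not_ge (Nat.le_of_mul_le_mul_left this (by positivity))

theorem no_apDestroying_of_large_two_torsion (k : ℕ) (hk : 0 < k)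
    (H : Type*) [AddCommGroup H] [Fintype H] (hH : Fintype.card H < 2 ^ k) :
    ¬ ∃ π : Equiv.Perm ((Fin k → ZMod 2) × H), APDestroying π :=
  no_apDestroying_of_large_two_torsion_general k H hH
end

section
/- Let n be a positive integer, write n = 2^k · m with m odd, and suppose m < 2^k (equivalently, the largest odd divisor of n is less than √n). Then there exists a finite abelian group of order n which admits no AP-destroying permutation. -/
theorem not_apDestroying_of_two_nsmul_eq_zero {G : Type*} [AddCommGroup G] (π : Equiv.Perm G)
    {a r : G} (hr : r ≠ 0) (h2r : 2 • r = 0) (hπ : 2 • (π a - π (a + r)) = 0) :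
    ¬ APDestroying π := fun h ↦ h a r hr <| by
  rw [h2r, add_zero, ← hπ]
  abel

theorem not_apDestroying_of_card_lt_sq {G : Type*} [AddCommGroup G] [Finite G]
    (H : AddSubgroup G) (hH : ∀ h ∈ H, 2 • h = 0) (hcard : Nat.card G < Nat.card H ^ 2)
    (π : Equiv.Perm G) : ¬ APDestroying π := by
  have hquot : Nat.card (G ⧸ H) < Nat.card H := by
    rw [← H.card_mul_index, sq] at hcard
    exact Nat.lt_of_mul_lt_mul_left hcard
  obtain ⟨x, y, hxy, hne⟩ := Function.not_injective_iff.mp fun hinj ↦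
    hquot.not_ge (Nat.card_le_card_of_injective (fun x : H ↦ (π x : G ⧸ H)) hinj)
  refine not_apDestroying_of_two_nsmul_eq_zero π (a := y) (r := x - y) ?_ (hH _ (x - y).2) ?_
  · exact sub_ne_zero.mpr (Subtype.coe_injective.ne hne)
  · rw [add_sub_cancel]
    exact hH _ (QuotientAddGroup.eq_iff_sub_mem.mp hxy.symm)

theorem exists_group_without_apDestroying_general (n k m : ℕ)
    (hfac : n = 2 ^ k * m) (hm : Odd m) (hlt : m < 2 ^ k) :
    ∃ (G : Type) (inst : AddCommGroup G) (instF : Fintype G),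
      @Fintype.card G instF = n ∧
      ∀ π : Equiv.Perm G, ¬ @APDestroying G inst π := by
  have : NeZero m := ⟨hm.pos.ne'⟩
  refine ⟨(Fin k → ZMod 2) × ZMod m, inferInstance, inferInstance, by simp [ZMod.card, hfac], ?_⟩
  refine not_apDestroying_of_card_lt_sq ((⊤ : AddSubgroup (Fin k → ZMod 2)).prod ⊥) ?_ ?_
  · rintro ⟨v, x⟩ hvx
    obtain rfl : x = 0 := (AddSubgroup.mem_prod.mp hvx).2
    exact Prod.ext (funext fun i ↦ CharTwo.two_nsmul (v i)) (nsmul_zero 2)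
  · rw [Nat.card_congr (AddSubgroup.prodEquiv _ _).toEquiv, Nat.card_prod, Nat.card_prod]
    simpa [sq] using Nat.mul_lt_mul_of_pos_left hlt (Nat.two_pow_pos k)

theorem exists_group_without_apDestroying (n k m : ℕ) (hn : 0 < n)
    (hfac : n = 2 ^ k * m) (hm : Odd m) (hlt : m < 2 ^ k) :
    ∃ (G : Type) (inst : AddCommGroup G) (instF : Fintype G),
      @Fintype.card G instF = n ∧
      ∀ π : Equiv.Perm G, ¬ @APDestroying G inst π :=
  exists_group_without_apDestroying_general n k m hfac hm hlt
end
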